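/- arXiv:2605.04712 — 2 statements merged into one kernel-verified Lean document; each statement's English description precedes it below -/
import Mathlib

section
/- Let K and K̃ be n × n real symmetric positive semidefinite matrices with Tr(K) > 0 and Tr(K̃) > 0. Let p = λ(K)/Tr(K) and p̃ = λ(K̃)/Tr(K̃) be the normalized eigenvalue vectors, τ = min{Tr(K), Tr(K̃)}, Δ = K − K̃, and ε = √n ‖Δ‖_F / τ. If ε ≤ 1 − 1/n, then |log r_e(K) − log r_e(K̃)| = |H(p) − H(p̃)| ≤ ε log(n−1) + h(ε), where h(ε) = −ε log ε − (1−ε) log(1−ε); consequently exp(−(ε log(n−1) + h(ε))) ≤ r_e(K)/r_e(K̃) ≤ exp(ε log(n−1) + h(ε)). -/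
open Matrix

open Classical in
/-- The eigenvalues of a symmetric real matrix (junk value `0` otherwise). -/
noncomputable def eigs {n : Type*} [Fintype n] [DecidableEq n] (A : Matrix n n ℝ) : n → ℝ :=
  if h : A.IsHermitian then h.eigenvalues else 0

open Classical in
/-- The largest eigenvalue of a symmetric real matrix. -/
noncomputable def maxEig {n : Type*} [Fintype n] [DecidableEq n] (A : Matrix n n ℝ) : ℝ :=
  if h : A.IsHermitian then ⨆ i, h.eigenvalues i else 0

open Classical in
/-- The smallest eigenvalue of a symmetric real matrix. -/
noncomputable def minEig {n : Type*} [Fintype n] [DecidableEq n] (A : Matrix n n ℝ) : ℝ :=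
  if h : A.IsHermitian then ⨅ i, h.eigenvalues i else 0

/-- The spectral condition number `κ(A) = λ_max(A) / λ_min(A)`. -/
noncomputable def condNumberR {n : Type*} [Fintype n] [DecidableEq n]
    (A : Matrix n n ℝ) : ℝ :=
  maxEig A / minEig A

open Classical in
/-- Spectral (Shannon) entropy of the normalized eigenvalue distribution
`p_i = λ_i / ∑_j λ_j` of a symmetric real matrix: `H(p) = -∑ p_i log p_i`. -/
noncomputable def specEntropy {n : Type*} [Fintype n] [DecidableEq n]
    (A : Matrix n n ℝ) : ℝ :=
  if h : A.IsHermitian then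
    -(∑ i, (h.eigenvalues i / ∑ j, h.eigenvalues j) *
        Real.log (h.eigenvalues i / ∑ j, h.eigenvalues j))
  else 0

/-- Spectral-entropy effective rank `r_e(A) = exp(H(p))` (for symmetric positive
semidefinite matrices the singular values equal the eigenvalues). -/
noncomputable def effRank {n : Type*} [Fintype n] [DecidableEq n]
    (A : Matrix n n ℝ) : ℝ :=
  Real.exp (specEntropy A)

/-- Squared Frobenius norm: `‖A‖_F² = Tr(Aᵀ A)`. -/
noncomputable def frobSq {m n : Type*} [Fintype m] [Fintype n] (A : Matrix m n ℝ) : ℝ :=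
  Matrix.trace (Aᵀ * A)

/-- Frobenius norm. -/
noncomputable def frobNorm {m n : Type*} [Fintype m] [Fintype n] (A : Matrix m n ℝ) : ℝ :=
  Real.sqrt (frobSq A)

/-- The binary entropy function `h(ε) = −ε log ε − (1−ε) log(1−ε)`. -/
noncomputable def binEnt (x : ℝ) : ℝ :=
  -(x * Real.log x) - (1 - x) * Real.log (1 - x)

section Helpers
open Real Finset Matrix


lemma entropy_le_log_card {n : Type*} [Fintype n] [DecidableEq n]
    (p : n → ℝ) (t : Finset n) (hp : ∀ i, 0 ≤ p i) (hsupp : ∀ i ∉ t, p i = 0)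
    (hsum : ∑ i, p i = 1) :
    ∑ i, Real.negMulLog (p i) ≤ Real.log (t.card : ℝ) := by
  have htne : t.Nonempty := by
    by_contra h
    rw [Finset.not_nonempty_iff_eq_empty] at h
    subst h
    have : (∑ i, p i) = 0 := Finset.sum_eq_zero fun i _ => hsupp i (by simp)
    rw [hsum] at this; norm_num at this
  have ht : (0:ℝ) < t.card := by exact_mod_cast Finset.card_pos.2 htne
  set k : ℝ := (t.card : ℝ)
  have hsum' : ∑ i ∈ t, p i = 1 := by
    rw [← hsum]
    exact Finset.sum_subset (Finset.subset_univ t) (fun i _ hi => hsupp i hi)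
  have key : ∀ x : ℝ, 0 ≤ x → Real.negMulLog x ≤ x * Real.log k + (1/k - x) := by
    intro x hx
    rcases eq_or_lt_of_le hx with rfl | hx'
    · simp [Real.negMulLog]; positivity
    · have h1 : Real.log (1/(k*x)) ≤ 1/(k*x) - 1 :=
        Real.log_le_sub_one_of_pos (by positivity)
      have h2 : Real.log (1/(k*x)) = -Real.log k - Real.log x := by
        rw [one_div, Real.log_inv, Real.log_mul (ne_of_gt ht) (ne_of_gt hx')]; ring
      have := mul_le_mul_of_nonneg_left h1 hx'.le
      rw [h2] at this
      have hxk : x * (1/(k*x) - 1) = 1/k - x := by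
        field_simp
      rw [hxk] at this
      simp only [Real.negMulLog, neg_mul]
      nlinarith [this]
  calc ∑ i, Real.negMulLog (p i) = ∑ i ∈ t, Real.negMulLog (p i) := by
        symm
        exact Finset.sum_subset (Finset.subset_univ t)
          (fun i _ hi => by rw [hsupp i hi]; simp)
    _ ≤ ∑ i ∈ t, (p i * Real.log k + (1/k - p i)) :=
        Finset.sum_le_sum fun i _ => key (p i) (hp i)
    _ = Real.log k := by
        rw [Finset.sum_add_distrib, ← Finset.sum_mul, hsum', Finset.sum_sub_distrib, hsum']
        simp [k]
        field_simp
        norm_num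

/-- Subadditivity of negMulLog. -/
lemma negMulLog_add_le (x y : ℝ) (hx : 0 ≤ x) (hy : 0 ≤ y) :
    Real.negMulLog (x + y) ≤ Real.negMulLog x + Real.negMulLog y := by
  rcases eq_or_lt_of_le hx with rfl | hx'
  · simp
  rcases eq_or_lt_of_le hy with rfl | hy'
  · simp
  simp only [Real.negMulLog, neg_mul]
  have h1 : Real.log x ≤ Real.log (x + y) := Real.log_le_log hx' (by linarith)
  have h2 : Real.log y ≤ Real.log (x + y) := Real.log_le_log hy' (by linarith)
  nlinarith

/-- Two-point concavity. -/
lemma negMulLog_combo (a b w v : ℝ) (ha : 0 ≤ a) (hb : 0 ≤ b) (hw : 0 ≤ w) (hv : 0 ≤ v)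
    (hwv : w + v = 1) :
    w * Real.negMulLog a + v * Real.negMulLog b ≤ Real.negMulLog (w * a + v * b) := by
  have := Real.concaveOn_negMulLog.2 (Set.mem_Ici.2 ha) (Set.mem_Ici.2 hb) hw hv hwv
  simpa [smul_eq_mul] using this

/-- One-sided Fannes–Audenaert inequality for probability vectors. -/
lemma fannes_one_sided {n : Type*} [Fintype n] [DecidableEq n]
    (p q : n → ℝ) (hp : ∀ i, 0 ≤ p i) (hq : ∀ i, 0 ≤ q i)
    (hps : ∑ i, p i = 1) (hqs : ∑ i, q i = 1)
    (δ : ℝ) (hδ : δ = (∑ i, |p i - q i|) / 2) (hδpos : 0 < δ) (hδlt : δ < 1) :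
    (∑ i, Real.negMulLog (p i)) - (∑ i, Real.negMulLog (q i)) ≤
      δ * Real.log ((Fintype.card n : ℝ) - 1) +
        (Real.negMulLog δ + Real.negMulLog (1 - δ)) := by
  set m : n → ℝ := fun i => min (p i) (q i) with hm
  set r : n → ℝ := fun i => p i - m i with hrdef
  set s : n → ℝ := fun i => q i - m i with hsdef
  have hr : ∀ i, 0 ≤ r i := fun i => by simp [hrdef, hm, min_le_left]
  have hs : ∀ i, 0 ≤ s i := fun i => by simp [hsdef, hm, min_le_right]
  have hm0 : ∀ i, 0 ≤ m i := fun i => le_min (hp i) (hq i)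
  have hrs0 : ∀ i, r i = 0 ∨ s i = 0 := by
    intro i
    rcases le_total (p i) (q i) with h | h
    · left; simp [hrdef, hm, min_eq_left h]
    · right; simp [hsdef, hm, min_eq_right h]
  have habs : ∀ i, |p i - q i| = r i + s i := by
    intro i
    rcases le_total (p i) (q i) with h | h
    · rw [abs_of_nonpos (by linarith)]; simp [hrdef, hsdef, hm, min_eq_left h] <;> ring
    · rw [abs_of_nonneg (by linarith)]; simp [hrdef, hsdef, hm, min_eq_right h] <;> ring
  have hrs_sum : (∑ i, r i) + (∑ i, s i) = 2 * δ := by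
    rw [← Finset.sum_add_distrib]
    simp_rw [← habs]
    rw [hδ]; ring
  have hrs_eq : (∑ i, r i) = (∑ i, s i) := by
    have : (∑ i, r i) - (∑ i, s i) = (∑ i, p i) - (∑ i, q i) := by
      rw [← Finset.sum_sub_distrib, ← Finset.sum_sub_distrib]
      congr 1; funext i; simp only [hrdef, hsdef]; ring
    rw [hps, hqs] at this
    linarith
  have hSr : (∑ i, r i) = δ := by linarith
  have hSs : (∑ i, s i) = δ := by linarith
  have hSm : (∑ i, m i) = 1 - δ := by
    have : (∑ i, m i) = (∑ i, p i) - (∑ i, r i) := by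
      rw [← Finset.sum_sub_distrib]; congr 1; funext i; simp [hrdef]
    rw [hps, hSr] at this; linarith
  set a : n → ℝ := fun i => m i / (1 - δ) with ha
  set b : n → ℝ := fun i => r i / δ with hb
  set c : n → ℝ := fun i => s i / δ with hc
  have h1δ : (0:ℝ) < 1 - δ := by linarith
  have hSa : (∑ i, a i) = 1 := by
    rw [ha]; rw [← Finset.sum_div, hSm]; field_simp
  have hSb : (∑ i, b i) = 1 := by
    rw [hb]; rw [← Finset.sum_div, hSr]; field_simp
  have hSc : (∑ i, c i) = 1 := by
    rw [hc]; rw [← Finset.sum_div, hSs]; field_simp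
  have ha0 : ∀ i, 0 ≤ a i := fun i => div_nonneg (hm0 i) h1δ.le
  have hb0 : ∀ i, 0 ≤ b i := fun i => div_nonneg (hr i) hδpos.le
  have hc0 : ∀ i, 0 ≤ c i := fun i => div_nonneg (hs i) hδpos.le
  have hpdecomp : ∀ i, p i = (1 - δ) * a i + δ * b i := by
    intro i
    have h1 : (1 - δ) * a i = m i := by rw [ha]; field_simp
    have h2 : δ * b i = r i := by rw [hb]; field_simp
    rw [h1, h2]; simp [hrdef]
  have hqdecomp : ∀ i, q i = (1 - δ) * a i + δ * c i := by
    intro i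
    have h1 : (1 - δ) * a i = m i := by rw [ha]; field_simp
    have h2 : δ * c i = s i := by rw [hc]; field_simp
    rw [h1, h2]; simp [hsdef]
  -- upper bound on H(p)
  have hup : (∑ i, Real.negMulLog (p i)) ≤
      (1 - δ) * (∑ i, Real.negMulLog (a i)) + δ * (∑ i, Real.negMulLog (b i)) +
        (Real.negMulLog δ + Real.negMulLog (1 - δ)) := by
    have step : ∀ i, Real.negMulLog (p i) ≤
        ((1 - δ) * Real.negMulLog (a i) + a i * Real.negMulLog (1 - δ)) +
        (δ * Real.negMulLog (b i) + b i * Real.negMulLog δ) := by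
      intro i
      rw [hpdecomp i]
      calc Real.negMulLog ((1 - δ) * a i + δ * b i)
          ≤ Real.negMulLog ((1 - δ) * a i) + Real.negMulLog (δ * b i) :=
            negMulLog_add_le _ _ (mul_nonneg h1δ.le (ha0 i)) (mul_nonneg hδpos.le (hb0 i))
        _ = ((1 - δ) * Real.negMulLog (a i) + a i * Real.negMulLog (1 - δ)) +
            (δ * Real.negMulLog (b i) + b i * Real.negMulLog δ) := by
            rw [Real.negMulLog_mul, Real.negMulLog_mul]; ring
    calc (∑ i, Real.negMulLog (p i)) ≤
        ∑ i, (((1 - δ) * Real.negMulLog (a i) + a i * Real.negMulLog (1 - δ)) +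
          (δ * Real.negMulLog (b i) + b i * Real.negMulLog δ)) :=
          Finset.sum_le_sum fun i _ => step i
      _ = (1 - δ) * (∑ i, Real.negMulLog (a i)) + δ * (∑ i, Real.negMulLog (b i)) +
          (Real.negMulLog δ + Real.negMulLog (1 - δ)) := by
          simp only [Finset.sum_add_distrib, ← Finset.mul_sum, ← Finset.sum_mul, hSa, hSb]
          ring
  -- lower bound on H(q)
  have hlow : (1 - δ) * (∑ i, Real.negMulLog (a i)) ≤ ∑ i, Real.negMulLog (q i) := by
    have step : ∀ i, (1 - δ) * Real.negMulLog (a i) + δ * Real.negMulLog (c i) ≤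
        Real.negMulLog (q i) := by
      intro i
      rw [hqdecomp i]
      exact negMulLog_combo _ _ _ _ (ha0 i) (hc0 i) h1δ.le hδpos.le (by ring)
    have hHc : 0 ≤ ∑ i, Real.negMulLog (c i) := by
      apply Finset.sum_nonneg
      intro i _
      apply Real.negMulLog_nonneg (hc0 i)
      calc c i ≤ ∑ j, c j := Finset.single_le_sum (fun j _ => hc0 j) (Finset.mem_univ i)
        _ = 1 := hSc
    calc (1 - δ) * (∑ i, Real.negMulLog (a i))
        ≤ (1 - δ) * (∑ i, Real.negMulLog (a i)) + δ * (∑ i, Real.negMulLog (c i)) := by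
          nlinarith
      _ = ∑ i, ((1 - δ) * Real.negMulLog (a i) + δ * Real.negMulLog (c i)) := by
          simp only [Finset.sum_add_distrib, ← Finset.mul_sum]
      _ ≤ ∑ i, Real.negMulLog (q i) := Finset.sum_le_sum fun i _ => step i
  -- H(b) ≤ log (n-1)
  obtain ⟨j₀, hj₀⟩ : ∃ j₀, s j₀ ≠ 0 := by
    by_contra h
    push_neg at h
    have : (∑ i, s i) = 0 := Finset.sum_eq_zero fun i _ => h i
    rw [hSs] at this; linarith
  have hbj₀ : b j₀ = 0 := by
    rcases hrs0 j₀ with h | h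
    · simp [hb, h]
    · exact absurd h hj₀
  have hHb : (∑ i, Real.negMulLog (b i)) ≤ Real.log ((Fintype.card n : ℝ) - 1) := by
    have hcard : ((Finset.univ.erase j₀).card : ℝ) = (Fintype.card n : ℝ) - 1 := by
      rw [Finset.card_erase_of_mem (Finset.mem_univ j₀)]
      rw [Nat.cast_sub (by exact Fintype.card_pos_iff.2 ⟨j₀⟩)]
      simp [Finset.card_univ]
    rw [← hcard]
    apply entropy_le_log_card b _ hb0 _ hSb
    intro i hi
    have : i = j₀ := by
      by_contra h
      exact hi (Finset.mem_erase.2 ⟨h, Finset.mem_univ i⟩)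
    rw [this]; exact hbj₀
  have hδHb : δ * (∑ i, Real.negMulLog (b i)) ≤ δ * Real.log ((Fintype.card n : ℝ) - 1) :=
    mul_le_mul_of_nonneg_left hHb hδpos.le
  linarith


variable {ι : Type*} [Fintype ι] [DecidableEq ι]

lemma trace_diag_conj (d e : ι → ℝ) (W : Matrix ι ι ℝ) :
    Matrix.trace (Matrix.diagonal d * W * Matrix.diagonal e * star W) =
      ∑ i, ∑ j, d i * e j * (W i j)^2 := by
  simp only [Matrix.trace, Matrix.diag, Matrix.mul_apply, Matrix.diagonal_apply, ite_mul,
    zero_mul, mul_ite, mul_zero, Finset.sum_ite_eq, Finset.sum_ite_eq', Finset.mem_univ, if_true,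
    Matrix.star_apply, star_trivial]
  apply Finset.sum_congr rfl
  intro i _
  apply Finset.sum_congr rfl
  intro j _
  ring

lemma trace_mul_eigen {A B : Matrix ι ι ℝ} (hA : A.IsHermitian) (hB : B.IsHermitian) :
    Matrix.trace (A * B) = ∑ i, ∑ j, hA.eigenvalues i * hB.eigenvalues j *
      (((star (hA.eigenvectorUnitary : Matrix ι ι ℝ)) * (hB.eigenvectorUnitary : Matrix ι ι ℝ))
        i j)^2 := by
  set U : Matrix ι ι ℝ := (hA.eigenvectorUnitary : Matrix ι ι ℝ)
  set V : Matrix ι ι ℝ := (hB.eigenvectorUnitary : Matrix ι ι ℝ)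
  have hdA : Matrix.diagonal (RCLike.ofReal ∘ hA.eigenvalues) = Matrix.diagonal hA.eigenvalues := by
    congr 1
  have hdB : Matrix.diagonal (RCLike.ofReal ∘ hB.eigenvalues) = Matrix.diagonal hB.eigenvalues := by
    congr 1
  calc Matrix.trace (A * B)
      = Matrix.trace ((U * Matrix.diagonal hA.eigenvalues * star U) *
          (V * Matrix.diagonal hB.eigenvalues * star V)) := by
        conv_lhs => rw [hA.spectral_theorem, hB.spectral_theorem]
        rw [hdA, hdB]
        rfl
    _ = Matrix.trace (U * (Matrix.diagonal hA.eigenvalues * (star U * V) *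
          Matrix.diagonal hB.eigenvalues * star V)) := by
        simp only [Matrix.mul_assoc]
    _ = Matrix.trace ((Matrix.diagonal hA.eigenvalues * (star U * V) *
          Matrix.diagonal hB.eigenvalues * star V) * U) := Matrix.trace_mul_comm _ _
    _ = Matrix.trace (Matrix.diagonal hA.eigenvalues * (star U * V) *
          Matrix.diagonal hB.eigenvalues * star (star U * V)) := by
        simp only [Matrix.star_mul, star_star, Matrix.mul_assoc]
    _ = ∑ i, ∑ j, hA.eigenvalues i * hB.eigenvalues j * (((star U) * V) i j)^2 :=
        trace_diag_conj _ _ _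

lemma exists_perm_hw {A B : Matrix ι ι ℝ} (hA : A.IsHermitian) (hB : B.IsHermitian) :
    ∃ σ : Equiv.Perm ι, ∑ i, (hA.eigenvalues i - hB.eigenvalues (σ i))^2 ≤
      Matrix.trace ((A - B)ᵀ * (A - B)) := by
  classical
  set lam := hA.eigenvalues with hlam
  set mu := hB.eigenvalues with hmu
  set U : Matrix ι ι ℝ := (hA.eigenvectorUnitary : Matrix ι ι ℝ)
  set V : Matrix ι ι ℝ := (hB.eigenvectorUnitary : Matrix ι ι ℝ)
  set W : Matrix ι ι ℝ := star U * V with hWdef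
  have hU' : star U * U = 1 := (Matrix.mem_unitaryGroup_iff').mp hA.eigenvectorUnitary.2
  have hV : V * star V = 1 := (Matrix.mem_unitaryGroup_iff).mp hB.eigenvectorUnitary.2
  have hV' : star V * V = 1 := (Matrix.mem_unitaryGroup_iff').mp hB.eigenvectorUnitary.2
  have hU : U * star U = 1 := (Matrix.mem_unitaryGroup_iff).mp hA.eigenvectorUnitary.2
  have hWW : W * star W = 1 := by
    rw [hWdef, Matrix.star_mul, star_star]
    calc star U * V * (star V * U) = star U * (V * star V) * U := by
          simp only [Matrix.mul_assoc]
      _ = 1 := by rw [hV, Matrix.mul_one, hU']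
  have hWW' : star W * W = 1 := by
    rw [hWdef, Matrix.star_mul, star_star]
    calc star V * U * (star U * V) = star V * (U * star U) * V := by
          simp only [Matrix.mul_assoc]
      _ = 1 := by rw [hU, Matrix.mul_one, hV']
  set S : Matrix ι ι ℝ := Matrix.of (fun i j => (W i j)^2) with hSdef
  have hrow : ∀ i, ∑ j, S i j = 1 := by
    intro i
    have h := congrArg (fun M : Matrix ι ι ℝ => M i i) hWW
    simp only [Matrix.mul_apply, Matrix.star_apply, star_trivial, Matrix.one_apply_eq] at h
    simpa [hSdef, pow_two] using h
  have hcol : ∀ j, ∑ i, S i j = 1 := by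
    intro j
    have h := congrArg (fun M : Matrix ι ι ℝ => M j j) hWW'
    simp only [Matrix.mul_apply, Matrix.star_apply, star_trivial, Matrix.one_apply_eq] at h
    simpa [hSdef, pow_two, mul_comm] using h
  have hS : S ∈ doublyStochastic ℝ ι := by
    rw [mem_doublyStochastic_iff_sum]
    exact ⟨fun i j => by simp only [hSdef, Matrix.of_apply]; positivity, hrow, hcol⟩
  obtain ⟨w, hw0, hw1, hwS⟩ := exists_eq_sum_perm_of_mem_doublyStochastic hS
  have hSentry : ∀ i j, S i j = ∑ σ : Equiv.Perm ι, w σ * (if σ i = j then 1 else 0) := by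
    intro i j
    rw [← hwS]
    simp only [Matrix.sum_apply, Finset.sum_apply, Matrix.smul_apply, smul_eq_mul, Equiv.Perm.permMatrix,
      PEquiv.toMatrix_apply, Equiv.toPEquiv_apply, Option.mem_def, Option.some.injEq]
  have key : ∑ i, ∑ j, lam i * mu j * S i j =
      ∑ σ : Equiv.Perm ι, w σ * (∑ i, lam i * mu (σ i)) := by
    have h1 : ∀ i j, lam i * mu j * S i j =
        ∑ σ : Equiv.Perm ι, w σ * (lam i * mu j * (if σ i = j then 1 else 0)) := by
      intro i j
      rw [hSentry i j, Finset.mul_sum]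
      apply Finset.sum_congr rfl
      intro σ _
      ring
    simp_rw [h1]
    calc ∑ i, ∑ j, ∑ σ : Equiv.Perm ι, w σ * (lam i * mu j * if σ i = j then 1 else 0)
        = ∑ i, ∑ σ : Equiv.Perm ι, ∑ j, w σ * (lam i * mu j * if σ i = j then 1 else 0) := by
          exact Finset.sum_congr rfl fun i _ => Finset.sum_comm
      _ = ∑ σ : Equiv.Perm ι, ∑ i, ∑ j, w σ * (lam i * mu j * if σ i = j then 1 else 0) :=
          Finset.sum_comm
      _ = ∑ σ : Equiv.Perm ι, w σ * (∑ i, lam i * mu (σ i)) := by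
          apply Finset.sum_congr rfl
          intro σ _
          rw [Finset.mul_sum]
          apply Finset.sum_congr rfl
          intro i _
          simp [mul_ite, mul_zero, mul_one, Finset.sum_ite_eq]
  obtain ⟨σ₀, -, hσ₀⟩ := Finset.exists_max_image Finset.univ
    (fun σ : Equiv.Perm ι => ∑ i, lam i * mu (σ i)) ⟨1, Finset.mem_univ 1⟩
  have hmax : ∑ i, ∑ j, lam i * mu j * S i j ≤ ∑ i, lam i * mu (σ₀ i) := by
    rw [key]
    calc ∑ σ : Equiv.Perm ι, w σ * (∑ i, lam i * mu (σ i))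
        ≤ ∑ σ : Equiv.Perm ι, w σ * (∑ i, lam i * mu (σ₀ i)) :=
          Finset.sum_le_sum fun σ _ =>
            mul_le_mul_of_nonneg_left (hσ₀ σ (Finset.mem_univ σ)) (hw0 σ)
      _ = ∑ i, lam i * mu (σ₀ i) := by rw [← Finset.sum_mul, hw1, one_mul]
  have htrAB : Matrix.trace (A * B) = ∑ i, ∑ j, lam i * mu j * S i j :=
    trace_mul_eigen hA hB
  have htrAA : Matrix.trace (A * A) = ∑ i, lam i ^ 2 := by
    rw [trace_mul_eigen hA hA]
    rw [show star U * U = 1 from hU']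
    simp [Matrix.one_apply, pow_two, mul_ite, mul_zero, mul_one, ite_mul, zero_mul,
      Finset.sum_ite_eq, Finset.sum_ite_eq']
    rfl
  have htrBB : Matrix.trace (B * B) = ∑ i, mu i ^ 2 := by
    rw [trace_mul_eigen hB hB]
    rw [show star V * V = 1 from hV']
    simp [Matrix.one_apply, pow_two, mul_ite, mul_zero, mul_one, ite_mul, zero_mul,
      Finset.sum_ite_eq, Finset.sum_ite_eq']
    rfl
  have hsub : (A - B)ᵀ = A - B := by
    rw [← Matrix.conjTranspose_eq_transpose_of_trivial]
    exact hA.sub hB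
  have hexpand : Matrix.trace ((A - B)ᵀ * (A - B)) =
      Matrix.trace (A * A) - 2 * Matrix.trace (A * B) + Matrix.trace (B * B) := by
    rw [hsub, Matrix.sub_mul, Matrix.mul_sub, Matrix.mul_sub, Matrix.trace_sub,
      Matrix.trace_sub, Matrix.trace_sub, Matrix.trace_mul_comm B A]
    ring
  refine ⟨σ₀, ?_⟩
  have hmuσ : ∑ i, (mu (σ₀ i)) ^ 2 = ∑ i, mu i ^ 2 := Equiv.sum_comp σ₀ (fun i => mu i ^ 2)
  have hexp2 : ∑ i, (lam i - mu (σ₀ i)) ^ 2 =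
      (∑ i, lam i ^ 2) - 2 * (∑ i, lam i * mu (σ₀ i)) + ∑ i, mu i ^ 2 := by
    rw [← hmuσ]
    rw [Finset.sum_congr rfl (fun i (_ : i ∈ Finset.univ) =>
      show (lam i - mu (σ₀ i)) ^ 2 =
        lam i ^ 2 - 2 * (lam i * mu (σ₀ i)) + (mu (σ₀ i)) ^ 2 by ring)]
    rw [Finset.sum_add_distrib, Finset.sum_sub_distrib, ← Finset.mul_sum]
  linarith


lemma g_mono {k : ℝ} (hk : 1 ≤ k) {a b : ℝ} (ha : 0 ≤ a) (hab : a ≤ b) (hb : b ≤ k / (k + 1)) :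
    a * Real.log k + (Real.negMulLog a + Real.negMulLog (1 - a)) ≤
      b * Real.log k + (Real.negMulLog b + Real.negMulLog (1 - b)) := by
  set g : ℝ → ℝ := fun x => x * Real.log k + (Real.negMulLog x + Real.negMulLog (1 - x)) with hg
  have hk0 : (0:ℝ) < k := by linarith
  have hk1 : (0:ℝ) < k + 1 := by linarith
  have hblt : k / (k + 1) < 1 := by
    rw [div_lt_one hk1]; linarith
  have hmono : MonotoneOn g (Set.Icc 0 (k / (k + 1))) := by
    apply monotoneOn_of_deriv_nonneg (convex_Icc _ _)
    · apply Continuous.continuousOn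
      exact (continuous_id.mul continuous_const).add
        (Real.continuous_negMulLog.add
          (Real.continuous_negMulLog.comp (continuous_const.sub continuous_id)))
    · intro x hx
      rw [interior_Icc] at hx
      have hx0 : x ≠ 0 := ne_of_gt hx.1
      have hx1 : (1:ℝ) - x ≠ 0 := by
        have : x < 1 := lt_trans hx.2 hblt
        intro h; rw [sub_eq_zero] at h; linarith
      have hd : HasDerivAt g (Real.log k + ((-Real.log x - 1) +
          (-Real.log (1 - x) - 1) * (0 - 1))) x := by
        apply HasDerivAt.add
        · simpa using (hasDerivAt_id x).mul_const (Real.log k)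
        · apply HasDerivAt.add
          · exact Real.hasDerivAt_negMulLog hx0
          · exact (Real.hasDerivAt_negMulLog hx1).comp x
              ((hasDerivAt_const x 1).sub (hasDerivAt_id x))
      exact hd.differentiableAt.differentiableWithinAt
    · intro x hx
      rw [interior_Icc] at hx
      have hx0 : (0:ℝ) < x := hx.1
      have hxk : x ≤ k / (k + 1) := hx.2.le
      have hx1 : x < 1 := lt_trans hx.2 hblt
      have h1x : (0:ℝ) < 1 - x := by linarith
      have hd : HasDerivAt g (Real.log k + ((-Real.log x - 1) +
          (-Real.log (1 - x) - 1) * (0 - 1))) x := by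
        apply HasDerivAt.add
        · simpa using (hasDerivAt_id x).mul_const (Real.log k)
        · apply HasDerivAt.add
          · exact Real.hasDerivAt_negMulLog (ne_of_gt hx0)
          · exact (Real.hasDerivAt_negMulLog (ne_of_gt h1x)).comp x
              ((hasDerivAt_const x 1).sub (hasDerivAt_id x))
      rw [hd.deriv]
      have hxle : x ≤ k * (1 - x) := by
        rw [le_div_iff₀ hk1] at hxk
        nlinarith
      have hlog : Real.log x ≤ Real.log (k * (1 - x)) := Real.log_le_log hx0 hxle
      rw [Real.log_mul (ne_of_gt hk0) (ne_of_gt h1x)] at hlog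
      nlinarith [hlog]
  have hmem1 : a ∈ Set.Icc 0 (k / (k + 1)) := ⟨ha, le_trans hab hb⟩
  have hmem2 : b ∈ Set.Icc 0 (k / (k + 1)) := ⟨le_trans ha hab, hb⟩
  exact hmono hmem1 hmem2 hab

lemma tv_bound {ι : Type*} [Fintype ι] (x y : ι → ℝ) (hy : ∀ i, 0 ≤ y i)
    (t t' : ℝ) (hxt : ∑ i, x i = t) (hyt : ∑ i, y i = t') (ht : 0 < t) (ht' : 0 < t') :
    (∑ i, |x i / t - y i / t'|) / 2 ≤ (∑ i, |x i - y i|) / t := by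
  have key : ∀ i, |x i / t - y i / t'| ≤ |x i - y i| / t + y i * |1/t - 1/t'| := by
    intro i
    have hsplit : x i / t - y i / t' = (x i - y i) / t + y i * (1/t - 1/t') := by
      field_simp; ring
    rw [hsplit]
    refine (abs_add_le _ _).trans ?_
    rw [abs_div, abs_of_pos ht, abs_mul, abs_of_nonneg (hy i)]
  have h1 : ∑ i, |x i / t - y i / t'| ≤ (∑ i, |x i - y i|) / t + t' * |1/t - 1/t'| := by
    calc ∑ i, |x i / t - y i / t'| ≤ ∑ i, (|x i - y i| / t + y i * |1/t - 1/t'|) :=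
          Finset.sum_le_sum fun i _ => key i
      _ = (∑ i, |x i - y i|) / t + t' * |1/t - 1/t'| := by
          rw [Finset.sum_add_distrib, ← Finset.sum_div, ← Finset.sum_mul, hyt, mul_comm]
  have h2 : t' * |1/t - 1/t'| = |t' - t| / t := by
    have : 1/t - 1/t' = (t' - t) / (t * t') := by field_simp
    rw [this, abs_div, abs_of_pos (mul_pos ht ht')]
    field_simp
  have h3 : |t' - t| ≤ ∑ i, |x i - y i| := by
    have heq : t' - t = ∑ i, (y i - x i) := by rw [← hxt, ← hyt, Finset.sum_sub_distrib]
    rw [heq]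
    calc |∑ i, (y i - x i)| ≤ ∑ i, |y i - x i| := Finset.abs_sum_le_sum_abs _ _
      _ = ∑ i, |x i - y i| := by simp [abs_sub_comm]
  have h4 : |t' - t| / t ≤ (∑ i, |x i - y i|) / t := by gcongr
  rw [h2] at h1
  linarith

lemma l1_le_sqrt_l2 {ι : Type*} [Fintype ι] (z : ι → ℝ) :
    ∑ i, |z i| ≤ Real.sqrt (Fintype.card ι) * Real.sqrt (∑ i, z i ^ 2) := by
  have h := sq_sum_le_card_mul_sum_sq (s := (Finset.univ : Finset ι)) (f := fun i => |z i|)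
  simp only [sq_abs, Finset.card_univ] at h
  have h0 : 0 ≤ ∑ i, |z i| := Finset.sum_nonneg fun i _ => abs_nonneg _
  calc ∑ i, |z i| = Real.sqrt ((∑ i, |z i|) ^ 2) := (Real.sqrt_sq h0).symm
    _ ≤ Real.sqrt ((Fintype.card ι : ℝ) * ∑ i, z i ^ 2) := Real.sqrt_le_sqrt (by exact_mod_cast h)
    _ = Real.sqrt (Fintype.card ι) * Real.sqrt (∑ i, z i ^ 2) := Real.sqrt_mul (by positivity) _

lemma sum_eigenvalues_eq_trace' {ι : Type*} [Fintype ι] [DecidableEq ι]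
    {A : Matrix ι ι ℝ} (hA : A.IsHermitian) :
    ∑ i, hA.eigenvalues i = A.trace := by
  set U : Matrix ι ι ℝ := (hA.eigenvectorUnitary : Matrix ι ι ℝ)
  have hU' : star U * U = 1 := (Matrix.mem_unitaryGroup_iff').mp hA.eigenvectorUnitary.2
  have hd : Matrix.diagonal (RCLike.ofReal ∘ hA.eigenvalues) = Matrix.diagonal hA.eigenvalues := by
    congr 1
  conv_rhs => rw [hA.spectral_theorem, hd]
  rw [Unitary.conjStarAlgAut_apply, Matrix.trace_mul_cycle, hU', Matrix.one_mul, Matrix.trace_diagonal]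

end Helpers

/-- **Stability of `r_e` under Frobenius perturbations.** Let `K, K̃` be `n × n` symmetric
positive semidefinite matrices with positive traces, `τ = min{Tr(K), Tr(K̃)}`,
`ε = √n ‖K − K̃‖_F / τ`.  If `ε ≤ 1 − 1/n`, then
`|log r_e(K) − log r_e(K̃)| = |H(p) − H(p̃)| ≤ ε log(n−1) + h(ε)`, and consequently
`exp(−(ε log(n−1) + h(ε))) ≤ r_e(K)/r_e(K̃) ≤ exp(ε log(n−1) + h(ε))`. -/
theorem stmt11 {n : ℕ} (K Kt : Matrix (Fin n) (Fin n) ℝ)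
    (hK : K.PosSemidef) (hKt : Kt.PosSemidef)
    (htrK : 0 < K.trace) (htrKt : 0 < Kt.trace)
    (τ ε : ℝ) (hτ : τ = min K.trace Kt.trace)
    (hε : ε = Real.sqrt (n : ℝ) * frobNorm (K - Kt) / τ)
    (hεle : ε ≤ 1 - 1 / (n : ℝ)) :
    |Real.log (effRank K) - Real.log (effRank Kt)| = |specEntropy K - specEntropy Kt| ∧
    |specEntropy K - specEntropy Kt| ≤ ε * Real.log ((n : ℝ) - 1) + binEnt ε ∧
    Real.exp (-(ε * Real.log ((n : ℝ) - 1) + binEnt ε)) ≤ effRank K / effRank Kt ∧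
    effRank K / effRank Kt ≤ Real.exp (ε * Real.log ((n : ℝ) - 1) + binEnt ε) := by
  classical
  have hHK : K.IsHermitian := hK.1
  have hHKt : Kt.IsHermitian := hKt.1
  have hn : 0 < n := by
    rcases Nat.eq_zero_or_pos n with h | h
    · subst h
      simp [Matrix.trace] at htrK
    · exact h
  have hτpos : 0 < τ := by rw [hτ]; exact lt_min htrK htrKt
  set lam : Fin n → ℝ := hHK.eigenvalues with hlamdef
  set mu : Fin n → ℝ := hHKt.eigenvalues with hmudef
  have hlamsum : ∑ i, lam i = K.trace := sum_eigenvalues_eq_trace' hHK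
  have hmusum : ∑ i, mu i = Kt.trace := sum_eigenvalues_eq_trace' hHKt
  set p : Fin n → ℝ := fun i => lam i / K.trace with hpdef
  set q' : Fin n → ℝ := fun i => mu i / Kt.trace with hq'def
  have hHKdef : specEntropy K = ∑ i, Real.negMulLog (p i) := by
    simp only [specEntropy, dif_pos hHK, ← hlamdef, hlamsum, ← hpdef]
    rw [← Finset.sum_neg_distrib]
    apply Finset.sum_congr rfl
    intro i _
    simp [Real.negMulLog]
    rfl
  have hHKtdef : specEntropy Kt = ∑ i, Real.negMulLog (q' i) := by
    simp only [specEntropy, dif_pos hHKt, ← hmudef, hmusum, ← hq'def]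
    rw [← Finset.sum_neg_distrib]
    apply Finset.sum_congr rfl
    intro i _
    simp [Real.negMulLog]
    rfl
  obtain ⟨σ, hσ⟩ := exists_perm_hw hHK hHKt
  set q : Fin n → ℝ := fun i => q' (σ i) with hqdef
  have hHq : ∑ i, Real.negMulLog (q i) = ∑ i, Real.negMulLog (q' i) :=
    Equiv.sum_comp σ (fun i => Real.negMulLog (q' i))
  have hp0 : ∀ i, 0 ≤ p i := fun i => div_nonneg (hK.eigenvalues_nonneg i) htrK.le
  have hq0 : ∀ i, 0 ≤ q i := fun i => div_nonneg (hKt.eigenvalues_nonneg (σ i)) htrKt.le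
  have hps : ∑ i, p i = 1 := by
    rw [hpdef, ← Finset.sum_div, hlamsum, div_self (ne_of_gt htrK)]
  have hqs : ∑ i, q i = 1 := by
    rw [hqdef]
    rw [Equiv.sum_comp σ q']
    rw [hq'def, ← Finset.sum_div, hmusum, div_self (ne_of_gt htrKt)]
  have hfrobnn : 0 ≤ frobNorm (K - Kt) := Real.sqrt_nonneg _
  have hε0 : 0 ≤ ε := by
    rw [hε]
    exact div_nonneg (mul_nonneg (Real.sqrt_nonneg _) hfrobnn) hτpos.le
  set δ : ℝ := (∑ i, |p i - q i|) / 2 with hδdef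
  have hδ0 : 0 ≤ δ := by
    rw [hδdef]
    apply div_nonneg _ (by norm_num)
    exact Finset.sum_nonneg fun i _ => abs_nonneg _
  -- δ ≤ ε
  have hδε : δ ≤ ε := by
    have h1 : δ ≤ (∑ i, |lam i - mu (σ i)|) / K.trace := by
      have := tv_bound lam (fun i => mu (σ i)) (fun i => hKt.eigenvalues_nonneg (σ i))
        K.trace Kt.trace hlamsum ((Equiv.sum_comp σ mu).trans hmusum) htrK htrKt
      simpa [hδdef, hpdef, hqdef, hq'def] using this
    have h2 : (∑ i, |lam i - mu (σ i)|) ≤ Real.sqrt (n : ℝ) * frobNorm (K - Kt) := by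
      calc (∑ i, |lam i - mu (σ i)|)
          ≤ Real.sqrt (Fintype.card (Fin n) : ℝ) *
              Real.sqrt (∑ i, (lam i - mu (σ i)) ^ 2) := l1_le_sqrt_l2 _
        _ ≤ Real.sqrt (n : ℝ) * frobNorm (K - Kt) := by
            rw [Fintype.card_fin]
            apply mul_le_mul_of_nonneg_left _ (Real.sqrt_nonneg _)
            exact Real.sqrt_le_sqrt hσ
    have h3 : (∑ i, |lam i - mu (σ i)|) / K.trace ≤ (∑ i, |lam i - mu (σ i)|) / τ := by
      have hτK : τ ≤ K.trace := by rw [hτ]; exact min_le_left _ _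
      gcongr
    have h4 : (∑ i, |lam i - mu (σ i)|) / τ ≤ Real.sqrt (n : ℝ) * frobNorm (K - Kt) / τ := by
      gcongr
    rw [hε]
    exact le_trans h1 (le_trans h3 h4)
  have hbinEnt : ∀ x : ℝ, binEnt x = Real.negMulLog x + Real.negMulLog (1 - x) := by
    intro x
    simp only [binEnt, Real.negMulLog, neg_mul]
    ring
  have hε1 : ε ≤ 1 := by
    have : (1:ℝ) - 1/(n:ℝ) ≤ 1 := by
      have : (0:ℝ) < (n:ℝ) := by exact_mod_cast hn
      have : (0:ℝ) ≤ 1/(n:ℝ) := by positivity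
      linarith
    linarith [hεle]
  -- main entropy bound
  have habs : |specEntropy K - specEntropy Kt| ≤ ε * Real.log ((n : ℝ) - 1) + binEnt ε := by
    have hrw : specEntropy K - specEntropy Kt =
        (∑ i, Real.negMulLog (p i)) - (∑ i, Real.negMulLog (q i)) := by
      rw [hHKdef, hHKtdef, hHq]
    rcases eq_or_lt_of_le hδ0 with hδz | hδpos
    · -- δ = 0 : p = q
      have hsum0 : ∑ i, |p i - q i| = 0 := by
        have : (∑ i, |p i - q i|) / 2 = 0 := hδz.symm
        linarith
      have hpq : ∀ i, p i = q i := by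
        intro i
        have h := (Finset.sum_eq_zero_iff_of_nonneg
          (fun i (_ : i ∈ Finset.univ) => abs_nonneg (p i - q i))).1 hsum0 i (Finset.mem_univ i)
        have := abs_eq_zero.1 h
        linarith
      have hzero : specEntropy K - specEntropy Kt = 0 := by
        rw [hrw]
        rw [Finset.sum_congr rfl fun i _ => congrArg Real.negMulLog (hpq i)]
        ring
      rw [hzero, abs_zero]
      have hb : 0 ≤ binEnt ε := by
        rw [hbinEnt]
        exact add_nonneg (Real.negMulLog_nonneg hε0 hε1)
          (Real.negMulLog_nonneg (by linarith) (by linarith))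
      have hl : 0 ≤ ε * Real.log ((n : ℝ) - 1) := by
        rcases le_or_gt 1 ((n : ℝ) - 1) with h | h
        · exact mul_nonneg hε0 (Real.log_nonneg h)
        · have hn1 : n = 1 := by
            have h2 : (n : ℝ) < 2 := by linarith
            have : n < 2 := by exact_mod_cast h2
            omega
          have hez : ε = 0 := by
            apply le_antisymm _ hε0
            rw [hn1] at hεle
            simpa using hεle
          simp [hez]
      linarith
    · -- δ > 0
      have hn2 : 2 ≤ n := by
        by_contra h
        push_neg at h
        have hn1 : n = 1 := by omega
        rw [hn1] at hεle
        norm_num at hεle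
        linarith [hδε, hδpos]
      have h1n : 1/(n:ℝ) > 0 := by
        have : (0:ℝ) < (n:ℝ) := by exact_mod_cast hn
        positivity
      have hδlt1 : δ < 1 := by
        have := hδε.trans hεle
        linarith
      have hcard : ((Fintype.card (Fin n) : ℝ) - 1) = (n : ℝ) - 1 := by
        rw [Fintype.card_fin]
      have fa1 := fannes_one_sided p q hp0 hq0 hps hqs δ hδdef hδpos hδlt1
      have fa2 := fannes_one_sided q p hq0 hp0 hqs hps δ
        (by rw [hδdef]; congr 1; exact Finset.sum_congr rfl fun i _ => abs_sub_comm _ _)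
        hδpos hδlt1
      rw [hcard] at fa1 fa2
      have hfa : |(∑ i, Real.negMulLog (p i)) - (∑ i, Real.negMulLog (q i))| ≤
          δ * Real.log ((n : ℝ) - 1) + (Real.negMulLog δ + Real.negMulLog (1 - δ)) := by
        rw [abs_le]
        constructor
        · linarith
        · linarith
      have hk1 : (1:ℝ) ≤ (n : ℝ) - 1 := by
        have : (2:ℝ) ≤ (n : ℝ) := by exact_mod_cast hn2
        linarith
      have hnne : (n:ℝ) ≠ 0 := by
        have : (0:ℝ) < (n:ℝ) := by exact_mod_cast hn
        linarith
      have hbfrac : ε ≤ ((n : ℝ) - 1) / (((n : ℝ) - 1) + 1) := by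
        have : ((n : ℝ) - 1) / (((n : ℝ) - 1) + 1) = 1 - 1/(n:ℝ) := by
          field_simp
          ring
        rw [this]
        exact hεle
      have hg := g_mono hk1 hδ0 hδε hbfrac
      rw [hrw]
      calc |(∑ i, Real.negMulLog (p i)) - (∑ i, Real.negMulLog (q i))|
          ≤ δ * Real.log ((n : ℝ) - 1) + (Real.negMulLog δ + Real.negMulLog (1 - δ)) := hfa
        _ ≤ ε * Real.log ((n : ℝ) - 1) + (Real.negMulLog ε + Real.negMulLog (1 - ε)) := hg
        _ = ε * Real.log ((n : ℝ) - 1) + binEnt ε := by rw [hbinEnt]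
  refine ⟨?_, habs, ?_, ?_⟩
  · simp [effRank, Real.log_exp]
  · rw [effRank, effRank, ← Real.exp_sub]
    apply Real.exp_le_exp.2
    have := (abs_le.1 habs).1
    linarith
  · rw [effRank, effRank, ← Real.exp_sub]
    apply Real.exp_le_exp.2
    exact (abs_le.1 habs).2
end

section
/- Let G be a real symmetric positive semidefinite matrix of size P × P (P = P_g + P_e) partitioned into blocks G = [[G_gg, G_ge], [G_eg, G_ee]] with G_eg = G_geᵀ, and let G_bd = [[G_gg, 0], [0, G_ee]] denote its block-diagonal part. Then the perturbation Δ = G − G_bd satisfies ‖Δ‖_F = √2 · ‖G_ge‖_F, and with τ = Tr(G) = Tr(G_bd) > 0 and ε = √P ‖Δ‖_F / τ, if ε ≤ 1 − 1/P then |log r_e(G) − log r_e(G_bd)| ≤ ε log(P−1) + h(ε), where h(ε) = −ε log ε − (1−ε) log(1−ε). -/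
open Matrix

namespace Stmt12Aux
open Finset Real Matrix

lemma eta_le_half (x : ℝ) (hx0 : 0 < x) (hx1 : x ≤ 1) : -x * Real.log x ≤ (1 - x^2)/2 := by
  have ht : 0 ≤ -Real.log x := by
    have := Real.log_nonpos hx0.le hx1; linarith
  have hs : -Real.log x ≤ Real.sinh (-Real.log x) := by
    rcases ht.eq_or_lt with h | h
    · rw [← h]; simp
    · exact (Real.self_lt_sinh_iff.2 h).le
  rw [Real.sinh_eq] at hs
  have hexp : Real.exp (-Real.log x) = x⁻¹ := by rw [Real.exp_neg, Real.exp_log hx0]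
  have hexp2 : Real.exp (-(-Real.log x)) = x := by rw [neg_neg, Real.exp_log hx0]
  rw [hexp, hexp2] at hs
  have := mul_le_mul_of_nonneg_left hs hx0.le
  have hxi : x * x⁻¹ = 1 := mul_inv_cancel₀ hx0.ne'
  nlinarith

lemma log_five_half : (4:ℝ)/5 ≤ Real.log (5/2) := by
  have h1 : Real.exp 1 < 2.7182818286 := Real.exp_one_lt_d9
  have h4 : Real.exp ((4:ℝ)/5) ≤ 5/2 := by
    by_contra h
    push_neg at h
    have h5 : ((5:ℝ)/2)^5 < (Real.exp ((4:ℝ)/5))^5 := by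
      apply pow_lt_pow_left₀ h (by norm_num)
      norm_num
    rw [← Real.exp_nat_mul] at h5
    norm_num at h5
    have h6 : Real.exp 4 = (Real.exp 1)^4 := by
      rw [← Real.exp_nat_mul]; norm_num
    have h7 : (Real.exp 1)^4 < 2.7182818286^4 :=
      pow_lt_pow_left₀ h1 (Real.exp_pos 1).le (by norm_num)
    rw [h6] at h5; norm_num at h7; linarith
  calc (4:ℝ)/5 = Real.log (Real.exp (4/5)) := by rw [Real.log_exp]
    _ ≤ Real.log (5/2) := Real.log_le_log (Real.exp_pos _) h4

lemma log_le_half_sub_one {d : ℝ} (hd0 : 0 < d) (hd : d ≤ 2/5) : Real.log d ≤ d/2 - 1 := by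
  have h1 : Real.log (5*d/2) ≤ 5*d/2 - 1 := Real.log_le_sub_one_of_pos (by linarith)
  have h2 : Real.log d = Real.log (5*d/2) - Real.log (5/2) := by
    rw [← Real.log_div (by positivity) (by norm_num)]
    congr 1; field_simp
  have := log_five_half
  rw [h2]; linarith

lemma eta_one_sub_le {d : ℝ} (hd0 : 0 ≤ d) (hd : d ≤ 2/5) :
    Real.negMulLog (1-d) ≤ Real.negMulLog d := by
  rcases hd0.eq_or_lt with h | h
  · simp [← h]
  have h1 : Real.negMulLog (1-d) ≤ d - d^2/2 := by
    have := eta_le_half (1-d) (by linarith) (by linarith)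
    rw [Real.negMulLog]; nlinarith
  have h2 : d - d^2/2 ≤ Real.negMulLog d := by
    have := log_le_half_sub_one h hd
    rw [Real.negMulLog]; nlinarith
  linarith

lemma eta_subadd {y d : ℝ} (hy : 0 ≤ y) (hd : 0 ≤ d) :
    Real.negMulLog (y + d) - Real.negMulLog y ≤ Real.negMulLog d := by
  rcases eq_or_lt_of_le (add_nonneg hy hd) with h | hc
  · have h1 : y = 0 := by linarith
    have h2 : d = 0 := by linarith
    simp [h1, h2]
  have hly : -y * Real.log (y+d) ≤ Real.negMulLog y := by
    rcases hy.eq_or_lt with h | h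
    · simp [← h, Real.negMulLog]
    · rw [Real.negMulLog]
      have := Real.log_le_log h (by linarith : y ≤ y + d)
      nlinarith
  have hld : -d * Real.log (y+d) ≤ Real.negMulLog d := by
    rcases hd.eq_or_lt with h | h
    · simp [← h, Real.negMulLog]
    · rw [Real.negMulLog]
      have := Real.log_le_log h (by linarith : d ≤ y + d)
      nlinarith
  have : Real.negMulLog (y+d) = -y * Real.log (y+d) + -d * Real.log (y+d) := by
    rw [Real.negMulLog]; ring
  linarith

lemma eta_sub_right {y d : ℝ} (hy : 0 ≤ y) (hd : 0 ≤ d) (h1 : y + d ≤ 1) (hd2 : d ≤ 2/5) :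
    Real.negMulLog y - Real.negMulLog (y + d) ≤ Real.negMulLog d := by
  rcases hd.eq_or_lt with h | hdpos
  · simp [← h]
  have hmono : MonotoneOn (fun y => Real.negMulLog y - Real.negMulLog (y + d))
      (Set.Icc 0 (1-d)) := by
    apply monotoneOn_of_deriv_nonneg (convex_Icc _ _)
    · fun_prop
    · intro x hx
      rw [interior_Icc] at hx
      have hx0 : x ≠ 0 := ne_of_gt hx.1
      have hxd : x + d ≠ 0 := ne_of_gt (by linarith [hx.1])
      apply DifferentiableAt.differentiableWithinAt
      apply DifferentiableAt.sub
      · exact Real.differentiableAt_negMulLog_iff.2 hx0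
      · exact ((Real.differentiableAt_negMulLog_iff.2 hxd).comp (f := fun y : ℝ => y + d) x (by fun_prop))
    · intro x hx
      rw [interior_Icc] at hx
      have hx0 : (0:ℝ) < x := hx.1
      have hd1 : HasDerivAt (fun y => Real.negMulLog y - Real.negMulLog (y + d))
          ((-Real.log x - 1) - (-Real.log (x+d) - 1)) x := by
        apply HasDerivAt.sub (Real.hasDerivAt_negMulLog hx0.ne')
        have h2 : HasDerivAt (fun y : ℝ => y + d) 1 x := by
          simpa using (hasDerivAt_id x).add_const d
        simpa [Function.comp_def] using (Real.hasDerivAt_negMulLog (x := x + d) (by positivity)).comp x h2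
      rw [hd1.deriv]
      have := Real.log_le_log hx0 (by linarith : x ≤ x + d)
      linarith
  have hy' : y ∈ Set.Icc (0:ℝ) (1-d) := ⟨hy, by linarith⟩
  have h1d : (1-d) ∈ Set.Icc (0:ℝ) (1-d) := ⟨by linarith, le_refl _⟩
  have := hmono hy' h1d (by linarith : y ≤ 1 - d)
  simp only at this
  have h3 : (1 : ℝ) - d + d = 1 := by ring
  rw [h3, Real.negMulLog_one] at this
  have := eta_one_sub_le hd hd2
  linarith

lemma abs_eta_sub {x y : ℝ} (hx : 0 ≤ x) (hx1 : x ≤ 1) (hy : 0 ≤ y) (hy1 : y ≤ 1)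
    (hd : |x - y| ≤ 2/5) : |Real.negMulLog x - Real.negMulLog y| ≤ Real.negMulLog |x - y| := by
  rcases le_total y x with h | h
  · rw [abs_of_nonneg (by linarith : (0:ℝ) ≤ x - y)] at *
    have hx' : x = y + (x - y) := by ring
    rw [abs_le]
    constructor
    · have := eta_sub_right hy (by linarith : 0 ≤ x - y) (by linarith) hd
      rw [← hx'] at this; linarith
    · have := eta_subadd hy (by linarith : 0 ≤ x - y)
      rw [← hx'] at this; linarith
  · rw [abs_sub_comm x y, abs_of_nonneg (by linarith : (0:ℝ) ≤ y - x)] at hd ⊢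
    have hy' : y = x + (y - x) := by ring
    rw [abs_le]
    constructor
    · have := eta_subadd hx (by linarith : 0 ≤ y - x)
      rw [← hy'] at this; linarith
    · have := eta_sub_right hx (by linarith : 0 ≤ y - x) (by linarith) hd
      rw [← hy'] at this; linarith

lemma eta_mono {a b : ℝ} (ha : 0 ≤ a) (hab : a ≤ b) (hb : Real.log b ≤ -1) :
    Real.negMulLog a ≤ Real.negMulLog b := by
  rcases ha.eq_or_lt with h | hapos
  · rw [← h, Real.negMulLog_zero]
    rcases hab.eq_or_lt with h2 | hbpos
    · rw [← h2, ← h, Real.negMulLog_zero]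
    · apply Real.negMulLog_nonneg (by linarith)
      have : Real.log b ≤ 0 := by linarith
      by_contra hb1
      push_neg at hb1
      have := Real.log_pos hb1
      linarith
  have hbpos : 0 < b := lt_of_lt_of_le hapos hab
  have t1 : (a - b) * Real.log b ≥ (a-b) * (-1) :=
    mul_le_mul_of_nonpos_left hb (by linarith)
  have t2 : a * Real.log (a/b) ≥ a * (1 - b/a) := by
    apply mul_le_mul_of_nonneg_left _ hapos.le
    have := Real.one_sub_inv_le_log_of_pos (x := a/b) (by positivity)
    have hba : (a/b)⁻¹ = b/a := by field_simp
    rw [hba] at this; linarith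
  have expand : Real.negMulLog b - Real.negMulLog a
      = (a - b) * Real.log b + a * Real.log (a/b) := by
    rw [Real.negMulLog, Real.negMulLog, Real.log_div hapos.ne' hbpos.ne']
    ring
  have ha2 : a * (1 - b/a) = a - b := by field_simp
  rw [ha2] at t2
  linarith

lemma key_logN {N : ℕ} (hN : 2 ≤ N) :
    ((N:ℝ) - 1) * (Real.log N - Real.log ((N:ℝ)-1)) ≤ Real.log N := by
  rcases eq_or_lt_of_le hN with h | h
  · rw [← h]; norm_num
  have hN3' : (3:ℝ) ≤ (N:ℝ) := by exact_mod_cast h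
  have h1 : Real.log (N:ℝ) - Real.log ((N:ℝ)-1) = Real.log ((N:ℝ)/((N:ℝ)-1)) := by
    rw [Real.log_div (by positivity) (by linarith)]
  have h2 : Real.log ((N:ℝ)/((N:ℝ)-1)) ≤ (N:ℝ)/((N:ℝ)-1) - 1 :=
    Real.log_le_sub_one_of_pos (div_pos (by linarith) (by linarith))
  have hne : (N:ℝ)-1 ≠ 0 := by linarith
  have h3 : (N:ℝ)/((N:ℝ)-1) - 1 = 1/((N:ℝ)-1) := by
    field_simp
    ring
  have h4 : Real.log (N:ℝ) ≥ 1 := by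
    have : Real.exp 1 ≤ (N:ℝ) := by
      have := Real.exp_one_lt_d9; linarith
    calc (1:ℝ) = Real.log (Real.exp 1) := (Real.log_exp 1).symm
      _ ≤ Real.log (N:ℝ) := Real.log_le_log (Real.exp_pos 1) this
  have h5 : ((N:ℝ)-1) * (Real.log (N:ℝ) - Real.log ((N:ℝ)-1)) ≤ ((N:ℝ)-1) * (1/((N:ℝ)-1)) := by
    apply mul_le_mul_of_nonneg_left _ (by linarith)
    rw [h1]; linarith [h2, h3.le]
  have h6 : ((N:ℝ)-1) * (1/((N:ℝ)-1)) = 1 := by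
    rw [mul_one_div, div_self (by linarith : (N:ℝ)-1 ≠ 0)]
  linarith

lemma final_ineq {N : ℕ} (hN : 2 ≤ N) {ε : ℝ} (hε0 : 0 < ε)
    (hεle : ε ≤ 1 - 1/(N:ℝ)) :
    ε * Real.log (N:ℝ) - ε * Real.log ε ≤ ε * Real.log ((N:ℝ)-1) + binEnt ε := by
  have hN2 : (2:ℝ) ≤ (N:ℝ) := by exact_mod_cast hN
  have hNpos : (0:ℝ) < (N:ℝ) := by linarith
  have hden : 0 < 1 - 1/(N:ℝ) := by
    have h : 1/(N:ℝ) ≤ 1/2 := by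
      apply div_le_div_of_nonneg_left <;> linarith
    linarith
  have hlam0 : 0 ≤ ε / (1 - 1/(N:ℝ)) := div_nonneg hε0.le hden.le
  have hεlam : ε / (1 - 1/(N:ℝ)) * (1 - 1/(N:ℝ)) = ε := div_mul_cancel₀ _ hden.ne'
  have hlam1 : ε / (1 - 1/(N:ℝ)) ≤ 1 := by
    rw [div_le_one hden]; linarith
  have hcomb : ε / (1 - 1/(N:ℝ)) * (1/(N:ℝ)) + (1 - ε / (1 - 1/(N:ℝ))) * 1 = 1 - ε := by
    have : ε / (1 - 1/(N:ℝ)) * (1/(N:ℝ)) + (1 - ε / (1 - 1/(N:ℝ))) * 1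
        = 1 - ε / (1 - 1/(N:ℝ)) * (1 - 1/(N:ℝ)) := by ring
    rw [this, hεlam]
  have hconc := Real.concaveOn_negMulLog.2 (Set.mem_Ici.2 (by positivity : (0:ℝ) ≤ 1/(N:ℝ)))
      (Set.mem_Ici.2 (by norm_num : (0:ℝ) ≤ 1)) hlam0
      (by linarith : (0:ℝ) ≤ 1 - ε / (1 - 1/(N:ℝ)))
      (by ring : ε / (1 - 1/(N:ℝ)) + (1 - ε / (1 - 1/(N:ℝ))) = 1)
  simp only [smul_eq_mul, hcomb, Real.negMulLog_one, mul_zero, add_zero] at hconc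
  have hη : Real.negMulLog (1/(N:ℝ)) = (1/(N:ℝ)) * Real.log (N:ℝ) := by
    rw [Real.negMulLog, one_div, Real.log_inv]; ring
  rw [hη] at hconc
  have hkey := key_logN hN
  -- (1 - 1/N) * dlog ≤ (1/N) * log N
  have hstep : (1 - 1/(N:ℝ)) * (Real.log (N:ℝ) - Real.log ((N:ℝ)-1))
      ≤ (1/(N:ℝ)) * Real.log (N:ℝ) := by
    have e1 : (1 - 1/(N:ℝ)) * (Real.log (N:ℝ) - Real.log ((N:ℝ)-1))
        = ((N:ℝ)-1) * (Real.log (N:ℝ) - Real.log ((N:ℝ)-1)) / (N:ℝ) := by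
      field_simp
    have e2 : (1/(N:ℝ)) * Real.log (N:ℝ) = Real.log (N:ℝ) / (N:ℝ) := by ring
    rw [e1, e2]
    exact div_le_div_of_nonneg_right hkey hNpos.le
  have hmain : ε * (Real.log (N:ℝ) - Real.log ((N:ℝ)-1)) ≤ Real.negMulLog (1-ε) := by
    calc ε * (Real.log (N:ℝ) - Real.log ((N:ℝ)-1))
        = ε / (1 - 1/(N:ℝ)) * ((1 - 1/(N:ℝ)) * (Real.log (N:ℝ) - Real.log ((N:ℝ)-1))) := by
          rw [← mul_assoc, hεlam]
      _ ≤ ε / (1 - 1/(N:ℝ)) * ((1/(N:ℝ)) * Real.log (N:ℝ)) :=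
          mul_le_mul_of_nonneg_left hstep hlam0
      _ ≤ Real.negMulLog (1-ε) := hconc
  rw [binEnt]
  have hfin : Real.negMulLog (1-ε) = -((1-ε) * Real.log (1-ε)) := by rw [Real.negMulLog]; ring
  nlinarith [hmain]

lemma ent_diff_le {ι : Type*} [Fintype ι] (p q : ι → ℝ) (ε : ℝ)
    (hp0 : ∀ i, 0 ≤ p i) (hq0 : ∀ i, 0 ≤ q i)
    (hp1 : ∑ i, p i = 1) (hq1 : ∑ i, q i = 1)
    (hε0 : 0 < ε) (hN : 2 ≤ Fintype.card ι)
    (hs : ∑ i, |p i - q i| ≤ ε)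
    (hsi : ∀ i, |p i - q i| ≤ 2/5)
    (hεle : ε ≤ 1 - 1/(Fintype.card ι : ℝ)) :
    |∑ i, Real.negMulLog (p i) - ∑ i, Real.negMulLog (q i)|
      ≤ ε * Real.log ((Fintype.card ι : ℝ) - 1) + binEnt ε := by
  set N := Fintype.card ι with hNdef
  have hNR : (2:ℝ) ≤ (N:ℝ) := by exact_mod_cast hN
  have hNpos : (0:ℝ) < (N:ℝ) := by linarith
  have hp1' : ∀ i, p i ≤ 1 := fun i => by
    rw [← hp1]
    exact Finset.single_le_sum (fun j _ => hp0 j) (Finset.mem_univ i)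
  have hq1' : ∀ i, q i ≤ 1 := fun i => by
    rw [← hq1]
    exact Finset.single_le_sum (fun j _ => hq0 j) (Finset.mem_univ i)
  -- step 1
  have step1 : |∑ i, Real.negMulLog (p i) - ∑ i, Real.negMulLog (q i)|
      ≤ ∑ i, Real.negMulLog |p i - q i| := by
    rw [← Finset.sum_sub_distrib]
    refine (Finset.abs_sum_le_sum_abs _ _).trans (Finset.sum_le_sum fun i _ => ?_)
    exact abs_eta_sub (hp0 i) (hp1' i) (hq0 i) (hq1' i) (hsi i)
  -- step 2: Jensen
  have step2 : ∑ i, Real.negMulLog |p i - q i|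
      ≤ (N:ℝ) * Real.negMulLog ((∑ i, |p i - q i|) / N) := by
    have hjen := Real.concaveOn_negMulLog.le_map_sum (t := Finset.univ)
      (w := fun _ : ι => (N:ℝ)⁻¹) (p := fun i => |p i - q i|)
      (fun i _ => by positivity)
      (by simp [hNdef, Finset.card_univ]; field_simp; exact div_self (by rw [← hNdef]; exact hNpos.ne'))
      (fun i _ => Set.mem_Ici.2 (abs_nonneg _))
    simp only [smul_eq_mul] at hjen
    have e1 : ∑ i, (N:ℝ)⁻¹ * |p i - q i| = (∑ i, |p i - q i|) / N := by
      rw [← Finset.mul_sum]; ring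
    rw [e1] at hjen
    have e2 : ∑ i, (N:ℝ)⁻¹ * Real.negMulLog |p i - q i|
        = (N:ℝ)⁻¹ * ∑ i, Real.negMulLog |p i - q i| := by rw [← Finset.mul_sum]
    rw [e2] at hjen
    calc ∑ i, Real.negMulLog |p i - q i|
        = (N:ℝ) * ((N:ℝ)⁻¹ * ∑ i, Real.negMulLog |p i - q i|) := by
          field_simp
      _ ≤ (N:ℝ) * Real.negMulLog ((∑ i, |p i - q i|) / N) :=
          mul_le_mul_of_nonneg_left hjen hNpos.le
  -- step 3: monotone
  have hlogNe : Real.log (ε / N) ≤ -1 := by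
    have hεN : ε / N ≤ 1/(Real.exp 1) := by
      have he3 : Real.exp 1 < 3 := by
        have := Real.exp_one_lt_d9; linarith
      rw [div_le_div_iff₀ hNpos (Real.exp_pos 1)]
      have h2 : ε * Real.exp 1 ≤ (1 - 1/(N:ℝ)) * 3 := by
        apply mul_le_mul hεle he3.le (Real.exp_pos 1).le
        have : 1/(N:ℝ) ≤ 1 := by
          rw [div_le_one hNpos]; linarith
        linarith
      have h3 : (1 - 1/(N:ℝ)) * 3 ≤ (N:ℝ) := by
        have e4 : (1 - 1/(N:ℝ)) * 3 = 3 - 3/(N:ℝ) := by ring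
        rw [e4]
        rw [← mul_le_mul_iff_of_pos_right hNpos]
        have h7 : (3 - 3/(N:ℝ)) * N = 3*N - 3 := by field_simp
        rw [h7]
        nlinarith [sq_nonneg ((N:ℝ) - 3/2)]
      linarith
    calc Real.log (ε/N) ≤ Real.log (1/Real.exp 1) :=
        Real.log_le_log (by positivity) hεN
      _ = -1 := by rw [one_div, Real.log_inv, Real.log_exp]
  have step3 : Real.negMulLog ((∑ i, |p i - q i|) / N) ≤ Real.negMulLog (ε / N) := by
    apply eta_mono (by positivity) _ hlogNe
    apply div_le_div_of_nonneg_right hs hNpos.le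
  -- step 4
  have step4 : (N:ℝ) * Real.negMulLog (ε / N) = ε * Real.log (N:ℝ) - ε * Real.log ε := by
    rw [Real.negMulLog, Real.log_div hε0.ne' hNpos.ne']
    field_simp
    ring
  calc |∑ i, Real.negMulLog (p i) - ∑ i, Real.negMulLog (q i)|
      ≤ ∑ i, Real.negMulLog |p i - q i| := step1
    _ ≤ (N:ℝ) * Real.negMulLog ((∑ i, |p i - q i|) / N) := step2
    _ ≤ (N:ℝ) * Real.negMulLog (ε / N) :=
        mul_le_mul_of_nonneg_left step3 hNpos.le
    _ = ε * Real.log (N:ℝ) - ε * Real.log ε := step4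
    _ ≤ ε * Real.log ((N:ℝ) - 1) + binEnt ε := final_ineq hN hε0 hεle

variable {n : Type*} [Fintype n] [DecidableEq n]

lemma frobSq_eq_sum {m k : Type*} [Fintype m] [Fintype k] (A : Matrix m k ℝ) :
    frobSq A = ∑ i, ∑ j, (A i j)^2 := by
  rw [frobSq, Matrix.trace]
  simp only [Matrix.diag_apply, Matrix.mul_apply, Matrix.transpose_apply]
  rw [Finset.sum_comm]
  congr 1; ext i; congr 1; ext j; ring

lemma frobSq_nonneg {m k : Type*} [Fintype m] [Fintype k] (A : Matrix m k ℝ) :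
    0 ≤ frobSq A := by
  rw [frobSq_eq_sum]; positivity

lemma trace_eq_sum_eigs {A : Matrix n n ℝ} (hA : A.IsHermitian) :
    A.trace = ∑ i, hA.eigenvalues i := by
  conv_lhs => rw [hA.spectral_theorem, Unitary.conjStarAlgAut_apply]
  rw [Matrix.trace_mul_cycle]
  have h1 : (star (hA.eigenvectorUnitary : Matrix n n ℝ)) * (hA.eigenvectorUnitary : Matrix n n ℝ)
      = 1 := Matrix.mem_unitaryGroup_iff'.mp (hA.eigenvectorUnitary).2
  rw [h1, Matrix.one_mul, Matrix.trace_diagonal]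
  simp

lemma trace_mul_eq_overlap {A B : Matrix n n ℝ} (hA : A.IsHermitian) (hB : B.IsHermitian) :
    (A * B).trace = ∑ i, ∑ j, hA.eigenvalues i * hB.eigenvalues j *
      ((star (hA.eigenvectorUnitary : Matrix n n ℝ) * (hB.eigenvectorUnitary : Matrix n n ℝ)) i j)^2 := by
  set U : Matrix n n ℝ := (hA.eigenvectorUnitary : Matrix n n ℝ) with hU
  set V : Matrix n n ℝ := (hB.eigenvectorUnitary : Matrix n n ℝ) with hV
  set W : Matrix n n ℝ := star U * V with hW
  have hDA : Matrix.diagonal (RCLike.ofReal ∘ hA.eigenvalues) = Matrix.diagonal hA.eigenvalues := by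
    norm_num
  have hDB : Matrix.diagonal (RCLike.ofReal ∘ hB.eigenvalues) = Matrix.diagonal hB.eigenvalues := by
    norm_num
  have hsW : star W = star V * U := by
    rw [hW, Matrix.star_mul, star_star]
  have h1 : (A * B).trace
      = (W * Matrix.diagonal hB.eigenvalues * star W * Matrix.diagonal hA.eigenvalues).trace := by
    conv_lhs => rw [hA.spectral_theorem, hB.spectral_theorem, Unitary.conjStarAlgAut_apply, Unitary.conjStarAlgAut_apply]
    rw [hDA, hDB, ← hU, ← hV]
    rw [show (U * Matrix.diagonal hA.eigenvalues * star U) * (V * Matrix.diagonal hB.eigenvalues * star V)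
        = (U * Matrix.diagonal hA.eigenvalues) * (star U * V * Matrix.diagonal hB.eigenvalues * star V) by
      simp only [Matrix.mul_assoc]]
    rw [Matrix.trace_mul_comm]
    congr 1
    rw [hsW, hW]
    simp only [Matrix.mul_assoc]
  rw [h1, Matrix.trace]
  simp only [Matrix.diag_apply, Matrix.mul_apply, Matrix.star_apply, star_trivial,
    Matrix.diagonal_apply, mul_ite, ite_mul, mul_zero, zero_mul,
    Finset.sum_ite_eq, Finset.sum_ite_eq', Finset.mem_univ, if_true]
  refine Finset.sum_congr rfl fun i _ => ?_
  rw [Finset.sum_mul]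
  refine Finset.sum_congr rfl fun j _ => ?_
  ring

lemma overlap_unitary {A B : Matrix n n ℝ} (hA : A.IsHermitian) (hB : B.IsHermitian) :
    (∀ i, ∑ j, ((star (hA.eigenvectorUnitary : Matrix n n ℝ) * (hB.eigenvectorUnitary : Matrix n n ℝ)) i j)^2 = 1) ∧
    (∀ j, ∑ i, ((star (hA.eigenvectorUnitary : Matrix n n ℝ) * (hB.eigenvectorUnitary : Matrix n n ℝ)) i j)^2 = 1) := by
  set U : Matrix n n ℝ := (hA.eigenvectorUnitary : Matrix n n ℝ) with hU
  set V : Matrix n n ℝ := (hB.eigenvectorUnitary : Matrix n n ℝ) with hV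
  set W : Matrix n n ℝ := star U * V with hW
  have hUU' : star U * U = 1 := Matrix.mem_unitaryGroup_iff'.mp (hA.eigenvectorUnitary).2
  have hUU : U * star U = 1 := Matrix.mem_unitaryGroup_iff.mp (hA.eigenvectorUnitary).2
  have hVV' : star V * V = 1 := Matrix.mem_unitaryGroup_iff'.mp (hB.eigenvectorUnitary).2
  have hVV : V * star V = 1 := Matrix.mem_unitaryGroup_iff.mp (hB.eigenvectorUnitary).2
  have hsW : star W = star V * U := by rw [hW, Matrix.star_mul, star_star]
  have hWW : W * star W = 1 := by
    rw [hW, hsW, Matrix.mul_assoc, ← Matrix.mul_assoc V (star V) U, hVV, Matrix.one_mul, hUU']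
  have hWW' : star W * W = 1 := by
    rw [hW, hsW, Matrix.mul_assoc, ← Matrix.mul_assoc U (star U) V, hUU, Matrix.one_mul, hVV']
  constructor
  · intro i
    have := congrFun (congrFun hWW i) i
    simp only [Matrix.mul_apply, Matrix.star_apply, star_trivial, Matrix.one_apply_eq] at this
    rw [← this]
    congr 1; ext j; ring
  · intro j
    have := congrFun (congrFun hWW' j) j
    simp only [Matrix.mul_apply, Matrix.star_apply, star_trivial, Matrix.one_apply_eq] at this
    rw [← this]
    congr 1; ext i; ring

lemma exists_perm_le_of_doublyStochastic (S : Matrix n n ℝ) (hS : S ∈ doublyStochastic ℝ n)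
    (c : n → n → ℝ) :
    ∃ σ : Equiv.Perm n, ∑ i, c i (σ i) ≤ ∑ i, ∑ j, S i j * c i j := by
  obtain ⟨w, hw0, hw1, hw2⟩ := exists_eq_sum_perm_of_mem_doublyStochastic hS
  have hperm : ∀ (σ : Equiv.Perm n) i, ∑ j, (σ.permMatrix ℝ) i j * c i j = c i (σ i) := by
    intro σ i
    have h : ∀ j, (σ.permMatrix ℝ) i j = if σ i = j then (1:ℝ) else 0 := by
      intro j
      rw [Equiv.Perm.permMatrix, PEquiv.toMatrix_apply, Equiv.toPEquiv_apply]
      simp [Option.mem_def, eq_comm]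
    simp only [h, ite_mul, one_mul, zero_mul, Finset.sum_ite_eq, Finset.mem_univ, if_true]
  have hexp : ∑ i, ∑ j, S i j * c i j = ∑ σ : Equiv.Perm n, w σ * ∑ i, c i (σ i) := by
    calc ∑ i, ∑ j, S i j * c i j
        = ∑ i, ∑ j, ∑ σ : Equiv.Perm n, w σ * ((σ.permMatrix ℝ) i j * c i j) := by
          refine Finset.sum_congr rfl fun i _ => Finset.sum_congr rfl fun j _ => ?_
          rw [← hw2]
          simp only [Matrix.sum_apply, Matrix.smul_apply, smul_eq_mul]
          rw [Finset.sum_mul]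
          refine Finset.sum_congr rfl fun σ _ => ?_
          ring
      _ = ∑ i, ∑ σ : Equiv.Perm n, ∑ j, w σ * ((σ.permMatrix ℝ) i j * c i j) :=
          Finset.sum_congr rfl fun i _ => Finset.sum_comm
      _ = ∑ σ : Equiv.Perm n, ∑ i, ∑ j, w σ * ((σ.permMatrix ℝ) i j * c i j) :=
          Finset.sum_comm
      _ = ∑ σ : Equiv.Perm n, w σ * ∑ i, c i (σ i) := by
          refine Finset.sum_congr rfl fun σ _ => ?_
          rw [Finset.mul_sum]
          refine Finset.sum_congr rfl fun i _ => ?_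
          rw [← hperm σ i, Finset.mul_sum]
  by_contra hcon
  push_neg at hcon
  set T := ∑ i, ∑ j, S i j * c i j with hT
  have hstrict : ∃ σ : Equiv.Perm n, 0 < w σ := by
    by_contra h
    push_neg at h
    have : ∑ σ : Equiv.Perm n, w σ ≤ 0 := Finset.sum_nonpos fun σ _ => h σ
    rw [hw1] at this; linarith
  obtain ⟨σ₀, hσ₀⟩ := hstrict
  have hlt : ∑ σ : Equiv.Perm n, w σ * T < ∑ σ : Equiv.Perm n, w σ * ∑ i, c i (σ i) := by
    apply Finset.sum_lt_sum
    · intro σ _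
      exact mul_le_mul_of_nonneg_left (hcon σ).le (hw0 σ)
    · exact ⟨σ₀, Finset.mem_univ _, mul_lt_mul_of_pos_left (hcon σ₀) hσ₀⟩
  rw [← Finset.sum_mul, hw1, one_mul, ← hexp] at hlt
  exact lt_irrefl _ hlt

lemma hoffman_wielandt {A B : Matrix n n ℝ} (hA : A.IsHermitian) (hB : B.IsHermitian) :
    ∃ σ : Equiv.Perm n,
      ∑ i, (hA.eigenvalues i - hB.eigenvalues (σ i))^2 ≤ frobSq (A - B) := by
  set lam := hA.eigenvalues with hlam
  set mu := hB.eigenvalues with hmu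
  set W : Matrix n n ℝ :=
    star (hA.eigenvectorUnitary : Matrix n n ℝ) * (hB.eigenvectorUnitary : Matrix n n ℝ) with hWdef
  set S : Matrix n n ℝ := Matrix.of (fun i j => (W i j)^2) with hSdef
  obtain ⟨hrow, hcol⟩ := overlap_unitary hA hB
  have hSmem : S ∈ doublyStochastic ℝ n := by
    rw [mem_doublyStochastic_iff_sum]
    refine ⟨fun i j => sq_nonneg _, fun i => hrow i, fun j => hcol j⟩
  -- transpose facts
  have hAT : (A - B)ᵀ = A - B := by
    rw [Matrix.transpose_sub, ← Matrix.conjTranspose_eq_transpose_of_trivial,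
      ← Matrix.conjTranspose_eq_transpose_of_trivial, hA.eq, hB.eq]
  have hfr : frobSq (A - B) = (A*A).trace - (A*B).trace - (B*A).trace + (B*B).trace := by
    rw [frobSq, hAT, Matrix.sub_mul, Matrix.mul_sub, Matrix.mul_sub, Matrix.trace_sub,
      Matrix.trace_sub, Matrix.trace_sub]
    ring
  have hAA : (A*A).trace = ∑ i, (lam i)^2 := by
    rw [trace_mul_eq_overlap hA hA]
    have h1 : star (hA.eigenvectorUnitary : Matrix n n ℝ) * (hA.eigenvectorUnitary : Matrix n n ℝ)
        = 1 := Matrix.mem_unitaryGroup_iff'.mp (hA.eigenvectorUnitary).2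
    rw [h1]
    simp only [Matrix.one_apply]
    refine Finset.sum_congr rfl fun i _ => ?_
    rw [Finset.sum_eq_single i]
    · simp [sq, hlam]
    · intro j _ hji
      simp [if_neg (Ne.symm hji).symm, hji]
      intro h; exact absurd h.symm hji
    · intro h; exact absurd (Finset.mem_univ i) h
  have hBB : (B*B).trace = ∑ i, (mu i)^2 := by
    rw [trace_mul_eq_overlap hB hB]
    have h1 : star (hB.eigenvectorUnitary : Matrix n n ℝ) * (hB.eigenvectorUnitary : Matrix n n ℝ)
        = 1 := Matrix.mem_unitaryGroup_iff'.mp (hB.eigenvectorUnitary).2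
    rw [h1]
    simp only [Matrix.one_apply]
    refine Finset.sum_congr rfl fun i _ => ?_
    rw [Finset.sum_eq_single i]
    · simp [sq, hmu]
    · intro j _ hji
      simp [hji]
      intro h; exact absurd h.symm hji
    · intro h; exact absurd (Finset.mem_univ i) h
  have hAB : (A*B).trace = ∑ i, ∑ j, lam i * mu j * S i j :=
    trace_mul_eq_overlap hA hB
  have hBA : (B*A).trace = ∑ i, ∑ j, lam i * mu j * S i j := by
    rw [Matrix.trace_mul_comm, hAB]
  have hfr2 : frobSq (A - B) = ∑ i, ∑ j, S i j * (lam i - mu j)^2 := by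
    rw [hfr, hAA, hBB, hAB, hBA]
    have e1 : ∑ i, (lam i)^2 = ∑ i, ∑ j, S i j * (lam i)^2 := by
      refine Finset.sum_congr rfl fun i _ => ?_
      rw [← Finset.sum_mul]
      simp only [hSdef, Matrix.of_apply, hWdef]
      rw [hrow i, one_mul]
    have e2 : ∑ j, (mu j)^2 = ∑ i, ∑ j, S i j * (mu j)^2 := by
      rw [Finset.sum_comm]
      refine Finset.sum_congr rfl fun j _ => ?_
      rw [← Finset.sum_mul]
      simp only [hSdef, Matrix.of_apply, hWdef]
      rw [hcol j, one_mul]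
    rw [e1, e2, ← Finset.sum_sub_distrib, ← Finset.sum_sub_distrib, ← Finset.sum_add_distrib]
    refine Finset.sum_congr rfl fun i _ => ?_
    rw [← Finset.sum_sub_distrib, ← Finset.sum_sub_distrib, ← Finset.sum_add_distrib]
    refine Finset.sum_congr rfl fun j _ => ?_
    ring
  obtain ⟨σ, hσ⟩ := exists_perm_le_of_doublyStochastic S hSmem (fun i j => (lam i - mu j)^2)
  exact ⟨σ, by rw [hfr2]; exact hσ⟩

section Blocks
variable {Pg Pe : ℕ}

lemma frobSq_delta (Ggg : Matrix (Fin Pg) (Fin Pg) ℝ) (Gge : Matrix (Fin Pg) (Fin Pe) ℝ)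
    (Gee : Matrix (Fin Pe) (Fin Pe) ℝ) :
    frobSq (Matrix.fromBlocks Ggg Gge Ggeᵀ Gee - Matrix.fromBlocks Ggg 0 0 Gee)
      = 2 * frobSq Gge := by
  rw [frobSq_eq_sum, frobSq_eq_sum]
  rw [Fintype.sum_sum_type]
  simp only [Matrix.sub_apply, Matrix.fromBlocks_apply₁₁, Matrix.fromBlocks_apply₁₂,
    Matrix.fromBlocks_apply₂₁, Matrix.fromBlocks_apply₂₂, Fintype.sum_sum_type,
    Matrix.zero_apply, sub_zero, sub_self, Matrix.transpose_apply]
  simp only [ne_eq, OfNat.ofNat_ne_zero, not_false_eq_true, zero_pow, Finset.sum_const_zero,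
    zero_add, add_zero]
  rw [Finset.sum_comm (f := fun j i => (Gge i j)^2)]
  ring

lemma trace_blocks (Ggg : Matrix (Fin Pg) (Fin Pg) ℝ) (Gge : Matrix (Fin Pg) (Fin Pe) ℝ)
    (Gee : Matrix (Fin Pe) (Fin Pe) ℝ) :
    (Matrix.fromBlocks Ggg Gge Ggeᵀ Gee).trace = (Matrix.fromBlocks Ggg (0 : Matrix (Fin Pg) (Fin Pe) ℝ) (0 : Matrix (Fin Pe) (Fin Pg) ℝ) Gee).trace := by
  simp only [Matrix.trace, Matrix.diag_apply, Fintype.sum_sum_type,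
    Matrix.fromBlocks_apply₁₁, Matrix.fromBlocks_apply₂₂]

lemma posSemidef_blockdiag {Ggg : Matrix (Fin Pg) (Fin Pg) ℝ} {Gge : Matrix (Fin Pg) (Fin Pe) ℝ}
    {Gee : Matrix (Fin Pe) (Fin Pe) ℝ}
    (hpsd : (Matrix.fromBlocks Ggg Gge Ggeᵀ Gee).PosSemidef) :
    (Matrix.fromBlocks Ggg (0 : Matrix (Fin Pg) (Fin Pe) ℝ) (0 : Matrix (Fin Pe) (Fin Pg) ℝ) Gee).PosSemidef := by
  have hH := hpsd.1
  have hH' := hH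
  rw [Matrix.IsHermitian, Matrix.fromBlocks_conjTranspose] at hH'
  have hGgg : Gggᴴ = Ggg := congrArg Matrix.toBlocks₁₁ hH'
  have hGee : Geeᴴ = Gee := congrArg Matrix.toBlocks₂₂ hH'
  rw [Matrix.posSemidef_iff_dotProduct_mulVec]
  constructor
  · rw [Matrix.IsHermitian, Matrix.fromBlocks_conjTranspose]
    rw [hGgg, hGee]
    simp
  · intro x
    have hx : x = Sum.elim (x ∘ Sum.inl) (x ∘ Sum.inr) := by
      funext i; cases i <;> rfl
    set a := x ∘ Sum.inl with ha
    set b := x ∘ Sum.inr with hb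
    have h1 := hpsd.dotProduct_mulVec_nonneg (Sum.elim a 0)
    have h2 := hpsd.dotProduct_mulVec_nonneg (Sum.elim 0 b)
    rw [Matrix.fromBlocks_mulVec] at h1 h2
    simp only [Sum.elim_comp_inl, Sum.elim_comp_inr, Matrix.mulVec_zero, add_zero, zero_add,
      star_trivial, sumElim_dotProduct_sumElim, zero_dotProduct,
      dotProduct_zero] at h1 h2
    rw [hx, Matrix.fromBlocks_mulVec]
    simp only [star_trivial, Sum.elim_comp_inl, Sum.elim_comp_inr, Matrix.mulVec_zero,
      Matrix.zero_mulVec, add_zero, zero_add, sumElim_dotProduct_sumElim]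
    exact add_nonneg h1 h2

end Blocks

end Stmt12Aux

open Stmt12Aux in
set_option maxHeartbeats 1600000 in
/-- **Gate–expert decoupling error bound.** Let `G` be a symmetric positive semidefinite
`P × P` matrix (`P = P_g + P_e`) partitioned as `G = [[G_gg, G_ge], [G_geᵀ, G_ee]]`, and let
`G_bd = [[G_gg, 0], [0, G_ee]]` be its block-diagonal part.  Then the perturbation
`Δ = G − G_bd` satisfies `‖Δ‖_F = √2 ‖G_ge‖_F` and `Tr(G) = Tr(G_bd)`, and with
`ε = √P ‖Δ‖_F / Tr(G)`, if `ε ≤ 1 − 1/P` then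
`|log r_e(G) − log r_e(G_bd)| ≤ ε log(P−1) + h(ε)`. -/
theorem stmt12 {Pg Pe : ℕ}
    (Ggg : Matrix (Fin Pg) (Fin Pg) ℝ) (Gge : Matrix (Fin Pg) (Fin Pe) ℝ)
    (Gee : Matrix (Fin Pe) (Fin Pe) ℝ)
    (G Gbd : Matrix (Fin Pg ⊕ Fin Pe) (Fin Pg ⊕ Fin Pe) ℝ)
    (hG : G = Matrix.fromBlocks Ggg Gge Ggeᵀ Gee)
    (hGbd : Gbd = Matrix.fromBlocks Ggg 0 0 Gee)
    (hpsd : G.PosSemidef) (htr : 0 < G.trace)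
    (ε : ℝ) (hε : ε = Real.sqrt ((Pg + Pe : ℕ) : ℝ) * frobNorm (G - Gbd) / G.trace) :
    frobNorm (G - Gbd) = Real.sqrt 2 * frobNorm Gge ∧
    G.trace = Gbd.trace ∧
    (ε ≤ 1 - 1 / ((Pg + Pe : ℕ) : ℝ) →
      |Real.log (effRank G) - Real.log (effRank Gbd)| ≤
        ε * Real.log (((Pg + Pe : ℕ) : ℝ) - 1) + binEnt ε) := by
  have hherm : G.IsHermitian := hpsd.1
  have hpsd' := hpsd
  rw [hG] at hpsd'
  have hpsdb : Gbd.PosSemidef := by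
    rw [hGbd]; exact posSemidef_blockdiag hpsd'
  have hhermb : Gbd.IsHermitian := hpsdb.1
  have htrbd : G.trace = Gbd.trace := by
    rw [hG, hGbd]; exact trace_blocks Ggg Gge Gee
  have hfs : frobSq (G - Gbd) = 2 * frobSq Gge := by
    rw [hG, hGbd]; exact frobSq_delta Ggg Gge Gee
  have hfrobeq : frobNorm (G - Gbd) = Real.sqrt 2 * frobNorm Gge := by
    rw [frobNorm, hfs, Real.sqrt_mul (by norm_num : (0:ℝ) ≤ 2), frobNorm]
  refine ⟨hfrobeq, htrbd, ?_⟩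
  intro hεle
  have hcard : Fintype.card (Fin Pg ⊕ Fin Pe) = Pg + Pe := by simp
  have hN1 : 1 ≤ Pg + Pe := by
    by_contra h
    push_neg at h
    have hPg : Pg = 0 := by omega
    have hPe : Pe = 0 := by omega
    subst hPg hPe
    have : G.trace = 0 := by
      rw [Matrix.trace]
      apply Finset.sum_eq_zero
      intro i _
      exact (i.elim (fun a => absurd a.2 (by omega)) (fun a => absurd a.2 (by omega)))
    linarith
  have hNR1 : (1:ℝ) ≤ ((Pg + Pe : ℕ) : ℝ) := by exact_mod_cast hN1
  have hNRpos : (0:ℝ) < ((Pg + Pe : ℕ) : ℝ) := by linarith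
  have hτpos : 0 < G.trace := htr
  have hsumlam : ∑ i, hherm.eigenvalues i = G.trace := (trace_eq_sum_eigs hherm).symm
  have hsummu : ∑ i, hhermb.eigenvalues i = G.trace := by
    rw [htrbd]; exact (trace_eq_sum_eigs hhermb).symm
  have hlam0 : ∀ i, 0 ≤ hherm.eigenvalues i := hpsd.eigenvalues_nonneg
  have hmu0 : ∀ i, 0 ≤ hhermb.eigenvalues i := hpsdb.eigenvalues_nonneg
  -- entropy as sums of negMulLog
  have hlogG : Real.log (effRank G) = ∑ i, Real.negMulLog (hherm.eigenvalues i / G.trace) := by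
    rw [effRank, Real.log_exp, specEntropy, dif_pos hherm, hsumlam, ← Finset.sum_neg_distrib]
    exact Finset.sum_congr rfl fun i _ => by rw [Real.negMulLog]; ring
  have hlogGbd : Real.log (effRank Gbd)
      = ∑ i, Real.negMulLog (hhermb.eigenvalues i / G.trace) := by
    rw [effRank, Real.log_exp, specEntropy, dif_pos hhermb, hsummu, ← Finset.sum_neg_distrib]
    exact Finset.sum_congr rfl fun i _ => by rw [Real.negMulLog]; ring
  obtain ⟨σ, hσ⟩ := hoffman_wielandt hherm hhermb
  have hεnn : 0 ≤ ε := by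
    rw [hε]
    apply div_nonneg _ hτpos.le
    exact mul_nonneg (Real.sqrt_nonneg _) (Real.sqrt_nonneg _)
  have hqcomp : ∑ i, Real.negMulLog (hhermb.eigenvalues i / G.trace)
      = ∑ i, Real.negMulLog (hhermb.eigenvalues (σ i) / G.trace) :=
    (Equiv.sum_comp σ (fun i => Real.negMulLog (hhermb.eigenvalues i / G.trace))).symm
  rcases hεnn.eq_or_lt with hεz | hεpos
  · -- ε = 0 : the matrices have identical spectra
    have hfnz : frobNorm (G - Gbd) = 0 := by
      have h0 : Real.sqrt ((Pg + Pe : ℕ) : ℝ) * frobNorm (G - Gbd) / G.trace = 0 := by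
        rw [← hε, ← hεz]
      have hsq : (0:ℝ) < Real.sqrt ((Pg + Pe : ℕ) : ℝ) := Real.sqrt_pos.2 hNRpos
      have h0' : Real.sqrt ((Pg + Pe : ℕ) : ℝ) * frobNorm (G - Gbd) = 0 := by
        field_simp [hτpos.ne'] at h0
        push_cast
        rw [mul_zero] at h0; exact_mod_cast h0
      rcases mul_eq_zero.mp h0' with h | h
      · exact absurd h hsq.ne'
      · exact h
    have hfsz : frobSq (G - Gbd) = 0 := by
      have := Real.sqrt_eq_zero (frobSq_nonneg (G - Gbd)) |>.mp hfnz
      exact this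
    have heig : ∀ i, hherm.eigenvalues i = hhermb.eigenvalues (σ i) := by
      have hle : ∑ i, (hherm.eigenvalues i - hhermb.eigenvalues (σ i))^2 ≤ 0 := by
        rw [← hfsz]; exact hσ
      have hz := Finset.sum_eq_zero_iff_of_nonneg
        (fun i _ => sq_nonneg (hherm.eigenvalues i - hhermb.eigenvalues (σ i))) |>.mp
        (le_antisymm hle (Finset.sum_nonneg fun i _ => sq_nonneg _))
      intro i
      have := hz i (Finset.mem_univ i)
      have := pow_eq_zero_iff (n := 2) (by norm_num) |>.mp this
      linarith [sub_eq_zero.mp this]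
    have : Real.log (effRank G) = Real.log (effRank Gbd) := by
      rw [hlogG, hlogGbd, hqcomp]
      exact Finset.sum_congr rfl fun i _ => by rw [heig i]
    rw [this, sub_self, abs_zero, ← hεz]
    simp [binEnt]
  · -- main case
    have hN2 : 2 ≤ Pg + Pe := by
      by_contra h
      push_neg at h
      have hN1' : Pg + Pe = 1 := by omega
      rw [hN1'] at hεle
      norm_num at hεle
      linarith
    have hN2' : 2 ≤ Fintype.card (Fin Pg ⊕ Fin Pe) := by rw [hcard]; exact hN2
    -- the probability vectors
    set p : (Fin Pg ⊕ Fin Pe) → ℝ := fun i => hherm.eigenvalues i / G.trace with hp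
    set q : (Fin Pg ⊕ Fin Pe) → ℝ := fun i => hhermb.eigenvalues (σ i) / G.trace with hq
    have hp0 : ∀ i, 0 ≤ p i := fun i => div_nonneg (hlam0 i) hτpos.le
    have hq0 : ∀ i, 0 ≤ q i := fun i => div_nonneg (hmu0 _) hτpos.le
    have hp1 : ∑ i, p i = 1 := by
      rw [hp, ← Finset.sum_div, hsumlam, div_self hτpos.ne']
    have hq1 : ∑ i, q i = 1 := by
      rw [hq, ← Finset.sum_div, Equiv.sum_comp σ hhermb.eigenvalues, hsummu,
        div_self hτpos.ne']
    -- quadratic bound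
    have hε2 : (ε * G.trace)^2 = ((Pg + Pe : ℕ) : ℝ) * frobSq (G - Gbd) := by
      rw [hε, div_mul_cancel₀ _ hτpos.ne', mul_pow, Real.sq_sqrt (Nat.cast_nonneg _),
        frobNorm, Real.sq_sqrt (frobSq_nonneg _)]
    have hssq : ∑ i, (p i - q i)^2 ≤ ε^2 / ((Pg + Pe : ℕ) : ℝ) := by
      have h1 : ∑ i, (p i - q i)^2
          = (∑ i, (hherm.eigenvalues i - hhermb.eigenvalues (σ i))^2) / G.trace^2 := by
        rw [Finset.sum_div]
        refine Finset.sum_congr rfl fun i _ => ?_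
        rw [hp, hq, div_sub_div_same, div_pow]
      rw [h1]
      rw [div_le_div_iff₀ (by positivity) hNRpos]
      calc (∑ i, (hherm.eigenvalues i - hhermb.eigenvalues (σ i))^2) * ((Pg + Pe : ℕ) : ℝ)
          ≤ frobSq (G - Gbd) * ((Pg + Pe : ℕ) : ℝ) :=
            mul_le_mul_of_nonneg_right hσ hNRpos.le
        _ = ε^2 * G.trace^2 := by linear_combination -hε2
    have hs : ∑ i, |p i - q i| ≤ ε := by
      have h1 : (∑ i, |p i - q i|)^2 ≤ (Fintype.card (Fin Pg ⊕ Fin Pe) : ℝ)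
          * ∑ i, |p i - q i|^2 := by
        exact_mod_cast sq_sum_le_card_mul_sum_sq (s := Finset.univ) (f := fun i => |p i - q i|)
      have h2 : ∑ i, |p i - q i|^2 = ∑ i, (p i - q i)^2 :=
        Finset.sum_congr rfl fun i _ => sq_abs _
      rw [h2, hcard] at h1
      have h3 : ((Pg + Pe : ℕ) : ℝ) * (ε^2 / ((Pg + Pe : ℕ) : ℝ)) = ε^2 := by
        rw [← mul_div_assoc, mul_div_cancel_left₀ _ hNRpos.ne']
      have h4 : (∑ i, |p i - q i|)^2 ≤ ε^2 := by
        calc (∑ i, |p i - q i|)^2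
            ≤ ((Pg + Pe : ℕ) : ℝ) * ∑ i, (p i - q i)^2 := h1
          _ ≤ ((Pg + Pe : ℕ) : ℝ) * (ε^2 / ((Pg + Pe : ℕ) : ℝ)) :=
              mul_le_mul_of_nonneg_left hssq hNRpos.le
          _ = ε^2 := h3
      have h5 : 0 ≤ ∑ i, |p i - q i| := Finset.sum_nonneg fun i _ => abs_nonneg _
      nlinarith
    have hsi : ∀ i, |p i - q i| ≤ 2/5 := by
      intro i
      have h1 : (p i - q i)^2 ≤ ε^2 / ((Pg + Pe : ℕ) : ℝ) :=
        le_trans (Finset.single_le_sum (fun j _ => sq_nonneg (p j - q j))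
          (Finset.mem_univ i)) hssq
      have h2 : ε^2 ≤ (1 - 1/((Pg + Pe : ℕ) : ℝ))^2 := by
        apply pow_le_pow_left₀ hεnn hεle
      have h3 : (1 - 1/((Pg + Pe : ℕ) : ℝ))^2 / ((Pg + Pe : ℕ) : ℝ) ≤ 4/25 := by
        set x : ℝ := ((Pg + Pe : ℕ) : ℝ) with hx
        have hx1 : (1:ℝ) ≤ x := hNR1
        have hxpos : (0:ℝ) < x := hNRpos
        have e : 1 - 1/x = (x-1)/x := by field_simp
        rw [e, div_pow, div_div, div_le_div_iff₀ (by positivity) (by norm_num : (0:ℝ) < 25)]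
        have hu : 0 ≤ x - 1 := by linarith
        nlinarith [mul_nonneg hu (sq_nonneg (2*x-5)), mul_nonneg hu (sq_nonneg (x-5))]
      have h4 : (p i - q i)^2 ≤ 4/25 := by
        calc (p i - q i)^2 ≤ ε^2 / ((Pg + Pe : ℕ) : ℝ) := h1
          _ ≤ (1 - 1/((Pg + Pe : ℕ) : ℝ))^2 / ((Pg + Pe : ℕ) : ℝ) :=
              div_le_div_of_nonneg_right h2 hNRpos.le
          _ ≤ 4/25 := h3
      have h5 := abs_nonneg (p i - q i)
      nlinarith [sq_abs (p i - q i)]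
    have hmain := ent_diff_le p q ε hp0 hq0 hp1 hq1 hεpos hN2' hs hsi
      (by rw [hcard]; exact hεle)
    rw [hcard] at hmain
    rw [hlogG, hlogGbd, hqcomp]
    exact hmain
end
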